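/- arXiv:0911.5418 — 8 statements merged into one kernel-verified Lean document; each statement's English description precedes it below -/
import Mathlib

section
/- Let L be a Lie algebra of minimal dimension among finite-dimensional Lie algebras over a field that can be written as a sum L = A + B of two nilpotent subalgebras but are not solvable. Then L has no nonzero solvable ideals (i.e., the solvable radical of L is zero). -/
/-!
If the radical `R` of `L` were nonzero, then `L ⧸ R` would be a smaller sum of two nilpotent
subalgebras (the images of `A` and `B`), hence solvable by minimality; but an extension of a
solvable Lie algebra by a solvable ideal is solvable, so `L` would be solvable.
-/

namespace LieIdeal

variable {R L : Type*} [CommRing R] [LieRing L] [LieAlgebra R L] (I : LieIdeal R L)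

def mkQ : L →ₗ⁅R⁆ L ⧸ I :=
  { (I : Submodule R L).mkQ with map_lie' := rfl }

theorem mkQ_surjective : Function.Surjective I.mkQ :=
  Submodule.mkQ_surjective _

@[simp]
theorem ker_mkQ : I.mkQ.ker = I := by
  ext x
  exact Submodule.Quotient.mk_eq_zero (I : Submodule R L)

theorem finrank_quotient_lt {K : Type*} [Field K] [LieAlgebra K L] [FiniteDimensional K L]
    (J : LieIdeal K L) (hJ : J ≠ ⊥) :
    Module.finrank K (L ⧸ J) < Module.finrank K L := by
  have hpos : 0 < Module.finrank K (J : Submodule K L) := by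
    rw [Module.finrank_pos_iff, Submodule.nontrivial_iff_ne_bot]
    exact (LieSubmodule.toSubmodule_eq_bot J).not.mpr hJ
  have := Submodule.finrank_quotient_add_finrank (J : Submodule K L)
  change Module.finrank K (L ⧸ (J : Submodule K L)) < _
  omega

end LieIdeal

namespace LieSubalgebra

variable {R L L' : Type*} [CommRing R] [LieRing L] [LieAlgebra R L] [LieRing L'] [LieAlgebra R L']

theorem isNilpotent_map (f : L →ₗ⁅R⁆ L') (C : LieSubalgebra R L) [hC : LieRing.IsNilpotent C] :
    LieRing.IsNilpotent (C.map f) := by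
  have hrange : (f.comp C.incl).range = C.map f := by
    ext
    simp
  rw [← hrange]
  exact (f.comp C.incl).isNilpotent_range

theorem exists_eq_add_map_of_surjective {f : L →ₗ⁅R⁆ L'} (hf : Function.Surjective f)
    {A B : LieSubalgebra R L} (hAB : ∀ x : L, ∃ a ∈ A, ∃ b ∈ B, x = a + b) (y : L') :
    ∃ a ∈ A.map f, ∃ b ∈ B.map f, y = a + b := by
  obtain ⟨x, rfl⟩ := hf y
  obtain ⟨a, ha, b, hb, rfl⟩ := hAB x
  exact ⟨f a, ⟨a, ha, rfl⟩, f b, ⟨b, hb, rfl⟩, map_add f a b⟩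

end LieSubalgebra

namespace LieAlgebra

variable {R L : Type*} [CommRing R] [LieRing L] [LieAlgebra R L]

theorem isSolvable_of_isSolvable_quotient (I : LieIdeal R L) [IsSolvable I]
    [IsSolvable (L ⧸ I)] : IsSolvable L := by
  obtain ⟨k, hk⟩ := IsSolvable.solvable R (L ⧸ I)
  obtain ⟨l, hl⟩ := IsSolvable.solvable R I
  have hkI : derivedSeries R L k ≤ I := by
    rw [← I.ker_mkQ, ← LieIdeal.map_eq_bot_iff, LieIdeal.derivedSeries_map_eq k I.mkQ_surjective,
      hk]
  refine IsSolvable.mk (R := R) (k := l + k) ?_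
  rw [derivedSeries_def, derivedSeriesOfIdeal_add, eq_bot_iff,
    ← (I.derivedSeries_eq_bot_iff l).mp hl]
  exact derivedSeriesOfIdeal_mono hkI l

end LieAlgebra

/-- A minimal-dimensional finite-dimensional Lie algebra that is a sum of two nilpotent
subalgebras but is not solvable has zero solvable radical, i.e. it is semisimple in the
sense that it has no nonzero solvable ideals. -/
theorem minimal_counterexample_radical_eq_bot
    (K : Type*) [Field K]
    (L : Type u) [LieRing L] [LieAlgebra K L] [FiniteDimensional K L]
    (A B : LieSubalgebra K L)
    (hA : LieRing.IsNilpotent A) (hB : LieRing.IsNilpotent B)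
    (hsum : ∀ x : L, ∃ a ∈ A, ∃ b ∈ B, x = a + b)
    (hns : ¬ LieAlgebra.IsSolvable L)
    (hmin : ∀ (L' : Type u) [LieRing L'] [LieAlgebra K L'] [FiniteDimensional K L'],
      Module.finrank K L' < Module.finrank K L →
      ∀ A' B' : LieSubalgebra K L', LieRing.IsNilpotent A' →
        LieRing.IsNilpotent B' →
        (∀ x : L', ∃ a ∈ A', ∃ b ∈ B', x = a + b) →
        LieAlgebra.IsSolvable L') :
    LieAlgebra.radical K L = ⊥ := by
  by_contra hrad
  set I := LieAlgebra.radical K L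
  have : LieAlgebra.IsSolvable (L ⧸ I) :=
    hmin (L ⧸ I) (I.finrank_quotient_lt hrad) (A.map I.mkQ) (B.map I.mkQ)
      (A.isNilpotent_map I.mkQ (hC := hA)) (B.isNilpotent_map I.mkQ (hC := hB))
      (LieSubalgebra.exists_eq_add_map_of_surjective I.mkQ_surjective hsum)
  exact hns (LieAlgebra.isSolvable_of_isSolvable_quotient I)
end

section
/- Let L be a minimal-dimensional counterexample to the statement 'a sum of two nilpotent subalgebras is solvable', with decomposition L = A + B into nilpotent subalgebras. If L₀ is a proper Lie subalgebra of L containing A, then L₀ is solvable. -/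
/-!
A proper subalgebra `L₀ ⊇ A` inherits the decomposition `L₀ = A + (B ∩ L₀)` (modular law), both
summands are nilpotent as subalgebras of nilpotent algebras, and `dim L₀ < dim L`, so minimality of
`L` makes `L₀` solvable.
-/

namespace LieSubalgebra

variable {K L L' : Type*} [CommRing K] [LieRing L] [LieAlgebra K L] [LieRing L'] [LieAlgebra K L']

theorem isNilpotent_comap_of_injective {f : L' →ₗ⁅K⁆ L} (hf : Function.Injective f)
    (H : LieSubalgebra K L) [LieRing.IsNilpotent H] : LieRing.IsNilpotent (H.comap f) := by
  let g : H.comap f →ₗ⁅K⁆ H :=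
    { toFun := fun x => ⟨f x, x.2⟩
      map_add' := fun x y => by ext; simp
      map_smul' := fun c x => by ext; simp
      map_lie' := fun {x y} => by ext; simp }
  refine Function.Injective.lieAlgebra_isNilpotent (f := g) fun x y hxy => ?_
  exact Subtype.ext (hf (congrArg Subtype.val hxy))

theorem exists_add_mem_comap_incl_of_le {A B L₀ : LieSubalgebra K L}
    (hsum : ∀ x : L, ∃ a ∈ A, ∃ b ∈ B, x = a + b) (hAL₀ : A ≤ L₀) (x : L₀) :
    ∃ a ∈ A.comap L₀.incl, ∃ b ∈ B.comap L₀.incl, x = a + b := by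
  obtain ⟨a, ha, b, hb, hx⟩ := hsum x
  have haL₀ : a ∈ L₀ := hAL₀ ha
  have hbL₀ : b ∈ L₀ := by
    rw [eq_sub_of_add_eq' hx.symm]
    exact L₀.sub_mem x.2 haL₀
  exact ⟨⟨a, haL₀⟩, ha, ⟨b, hbL₀⟩, hb, Subtype.ext hx⟩

end LieSubalgebra

theorem LieSubalgebra.finrank_lt_of_ne_top {K L : Type*} [Field K] [LieRing L] [LieAlgebra K L]
    [FiniteDimensional K L] {L₀ : LieSubalgebra K L} (h : L₀ ≠ ⊤) :
    Module.finrank K L₀ < Module.finrank K L :=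
  Submodule.finrank_lt (mt L₀.toSubmodule_eq_top.mp h)

open LieSubalgebra in
theorem minimal_counterexample_proper_subalgebra_containing_A_solvable_general
    (K : Type*) [Field K]
    (L : Type u) [LieRing L] [LieAlgebra K L] [FiniteDimensional K L]
    (A B : LieSubalgebra K L)
    (hA : LieModule.IsNilpotent A A) (hB : LieModule.IsNilpotent B B)
    (hsum : ∀ x : L, ∃ a ∈ A, ∃ b ∈ B, x = a + b)
    (hmin : ∀ (L' : Type u) [LieRing L'] [LieAlgebra K L'] [FiniteDimensional K L'],
      Module.finrank K L' < Module.finrank K L →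
      ∀ A' B' : LieSubalgebra K L', LieModule.IsNilpotent A' A' →
        LieModule.IsNilpotent B' B' →
        (∀ x : L', ∃ a ∈ A', ∃ b ∈ B', x = a + b) →
        LieAlgebra.IsSolvable L')
    (L₀ : LieSubalgebra K L) (hAL₀ : A ≤ L₀) (hproper : L₀ ≠ ⊤) :
    LieAlgebra.IsSolvable L₀ :=
  hmin L₀ (finrank_lt_of_ne_top hproper) _ _
    (isNilpotent_comap_of_injective Subtype.val_injective A)
    (isNilpotent_comap_of_injective Subtype.val_injective B)
    (exists_add_mem_comap_incl_of_le hsum hAL₀)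

/-- In a minimal-dimensional counterexample `L = A + B` (sum of two nilpotent subalgebras,
`L` not solvable), every proper subalgebra containing `A` is solvable. -/
theorem minimal_counterexample_proper_subalgebra_containing_A_solvable
    (K : Type*) [Field K]
    (L : Type u) [LieRing L] [LieAlgebra K L] [FiniteDimensional K L]
    (A B : LieSubalgebra K L)
    (hA : LieModule.IsNilpotent A A) (hB : LieModule.IsNilpotent B B)
    (hsum : ∀ x : L, ∃ a ∈ A, ∃ b ∈ B, x = a + b)
    (hns : ¬ LieAlgebra.IsSolvable L)
    (hmin : ∀ (L' : Type u) [LieRing L'] [LieAlgebra K L'] [FiniteDimensional K L'],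
      Module.finrank K L' < Module.finrank K L →
      ∀ A' B' : LieSubalgebra K L', LieModule.IsNilpotent A' A' →
        LieModule.IsNilpotent B' B' →
        (∀ x : L', ∃ a ∈ A', ∃ b ∈ B', x = a + b) →
        LieAlgebra.IsSolvable L')
    (L₀ : LieSubalgebra K L) (hAL₀ : A ≤ L₀) (hproper : L₀ ≠ ⊤) :
    LieAlgebra.IsSolvable L₀ :=
  minimal_counterexample_proper_subalgebra_containing_A_solvable_general K L A B hA hB hsum hmin L₀
    hAL₀ hproper
end

section
/- Let K be a field of characteristic p > 0 and O₁ = K[x]/(x^p) the truncated polynomial algebra in one variable. Every Lie subalgebra D of Der(O₁) consisting of nilpotent derivations and such that O₁ contains no nonzero proper D-invariant ideal has dimension at most 1; in particular dim D < p. -/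
/-! Every derivation of `O₁ = K[x]/(xᵖ)` is `f ∂` with `f = d x` and `∂ = d/dx`, so
`⁅d, e⁆ x = d x · ∂(e x) - e x · ∂(d x)`. Irreducibility rules out that every `d ∈ D` maps `x`
into `(x)`, so some `d₀ ∈ D` has `d₀ x ≡ c₀ ≠ 0 mod x`. Now let `e ∈ D` with `e x ≡ c xᵏ mod xᵏ⁺¹`,
`c ≠ 0`, `1 ≤ k < p`. If `k = 1`, then `e` acts on `(x)/(x²)` as multiplication by `c`, which
contradicts nilpotency. If `k ≥ 2`, then `⁅d₀, e⁆ x ≡ k c c₀ xᵏ⁻¹` with `k c c₀ ≠ 0` because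
`k < p`, and descending on `k` ends at `k = 1`. Hence `d ↦ d x mod x` is injective on `D`. -/

/-- The ideal `(x₁^p, …, xₘ^p)` of the polynomial algebra. -/
noncomputable def truncationIdeal (K : Type*) [CommRing K] (m p : ℕ) : Ideal (MvPolynomial (Fin m) K) :=
  Ideal.span (Set.range fun i => (MvPolynomial.X i : MvPolynomial (Fin m) K) ^ p)

/-- The truncated polynomial algebra `Oₘ = K[x₁,…,xₘ]/(x₁^p,…,xₘ^p)`. -/
abbrev TruncPoly (K : Type*) [CommRing K] (m p : ℕ) : Type _ :=
  MvPolynomial (Fin m) K ⧸ truncationIdeal K m p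

section InitialTerm

variable {K A : Type*} [Field K] [CommRing A] [Algebra K A]

def HasInitialTerm (t a : A) (c : K) (k : ℕ) : Prop :=
  t ^ (k + 1) ∣ a - c • t ^ k

theorem eq_zero_of_pow_succ_dvd_smul_pow {t : A} {c : K} {k : ℕ} (hnil : IsNilpotent t)
    (hk : t ^ k ≠ 0) (h : t ^ (k + 1) ∣ c • t ^ k) : c = 0 := by
  by_contra hc
  obtain ⟨s, hs⟩ := h
  have hunit : IsUnit (1 - t * (c⁻¹ • s)) :=
    ((Commute.all t _).isNilpotent_mul_right hnil).isUnit_one_sub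
  have hfix : t ^ k = t ^ k * (t * (c⁻¹ • s)) := by
    rw [← mul_assoc, ← pow_succ, mul_smul_comm, ← hs, smul_smul, inv_mul_cancel₀ hc, one_smul]
  refine hk (hunit.mul_left_eq_zero.mp ?_)
  rw [mul_sub, mul_one, ← hfix, sub_self]

namespace HasInitialTerm

variable {t a b : A} {c c' : K} {k l : ℕ}

theorem pow_dvd (ha : HasInitialTerm t a c k) : t ^ k ∣ a := by
  have hsmul : t ^ k ∣ c • t ^ k := by
    rw [Algebra.smul_def]
    exact dvd_mul_left _ _
  exact (dvd_sub_left hsmul).mp ((pow_dvd_pow t k.le_succ).trans ha)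

theorem sub (ha : HasInitialTerm t a c k) (hb : HasInitialTerm t b c' k) :
    HasInitialTerm t (a - b) (c - c') k := by
  unfold HasInitialTerm at *
  convert dvd_sub ha hb using 1
  rw [sub_smul]
  abel

theorem smul (ha : HasInitialTerm t a c k) (r : K) : HasInitialTerm t (r • a) (r * c) k := by
  unfold HasInitialTerm at *
  rw [mul_smul, ← smul_sub, Algebra.smul_def]
  exact ha.mul_left _

theorem mul (ha : HasInitialTerm t a c k) (hb : HasInitialTerm t b c' l) :
    HasInitialTerm t (a * b) (c * c') (k + l) := by
  obtain ⟨r, hr⟩ := ha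
  obtain ⟨r', hr'⟩ := hb
  refine ⟨c • r' + c' • r + t * r * r', ?_⟩
  rw [sub_eq_iff_eq_add'] at hr hr'
  rw [hr, hr']
  simp only [Algebra.smul_def, map_mul]
  ring

theorem derivation (ha : HasInitialTerm t a c (k + 1)) {δ : Derivation K A A} (hδ : δ t = 1) :
    HasInitialTerm t (δ a) ((k + 1 : ℕ) * c) k := by
  obtain ⟨r, hr⟩ := ha
  rw [sub_eq_iff_eq_add'] at hr
  refine ⟨(k + 2 : ℕ) * r + t * δ r, ?_⟩
  have hδa : δ a = ((k + 1 : ℕ) : K) • (c • t ^ k) + t ^ (k + 1) * ((k + 2 : ℕ) * r + t * δ r) := by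
    rw [hr, map_add, Derivation.leibniz, Derivation.map_smul, Derivation.leibniz_pow,
      Derivation.leibniz_pow, hδ]
    simp only [smul_eq_mul, nsmul_eq_mul, add_tsub_cancel_right]
    simp only [Algebra.smul_def, map_natCast]
    push_cast
    ring
  rw [hδa, mul_smul, add_sub_cancel_left]

theorem unique (hnil : IsNilpotent t) (hk : t ^ k ≠ 0) (ha : HasInitialTerm t a c k)
    (ha' : HasInitialTerm t a c' k) : c = c' := by
  have := ha'.sub ha
  rw [sub_self, HasInitialTerm, zero_sub, dvd_neg] at this
  exact (sub_eq_zero.mp (eq_zero_of_pow_succ_dvd_smul_pow hnil hk this)).symm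

end HasInitialTerm

theorem hasInitialTerm_zero_iff {t a : A} {k : ℕ} :
    HasInitialTerm t a (0 : K) k ↔ t ^ (k + 1) ∣ a := by
  rw [HasInitialTerm, zero_smul, sub_zero]

theorem exists_hasInitialTerm_zero {t : A} (ht : Algebra.adjoin K {t} = ⊤) (a : A) :
    ∃ c : K, HasInitialTerm t a c 0 := by
  obtain ⟨f, rfl⟩ : ∃ f : Polynomial K, Polynomial.aeval t f = a := by
    rw [← AlgHom.mem_range, ← Algebra.adjoin_singleton_eq_range_aeval, ht]; trivial
  refine ⟨f.coeff 0, Polynomial.aeval t f.divX, ?_⟩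
  have hf := congrArg (Polynomial.aeval t) (Polynomial.X_mul_divX_add f)
  rw [map_add, map_mul, Polynomial.aeval_X, Polynomial.aeval_C] at hf
  rw [pow_zero, zero_add, pow_one, Algebra.smul_def, mul_one, ← hf, add_sub_cancel_right]

theorem exists_hasInitialTerm_zero_of_not_dvd {t a : A} (ht : Algebra.adjoin K {t} = ⊤)
    (ha : ¬ t ∣ a) : ∃ c : K, c ≠ 0 ∧ HasInitialTerm t a c 0 := by
  obtain ⟨c, hc⟩ := exists_hasInitialTerm_zero ht a
  refine ⟨c, ?_, hc⟩
  rintro rfl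
  rw [hasInitialTerm_zero_iff, zero_add, pow_one] at hc
  exact ha hc

theorem exists_hasInitialTerm_of_pow_dvd {t a : A} (ht : Algebra.adjoin K {t} = ⊤)
    (hnil : IsNilpotent t) (ha : a ≠ 0) {m : ℕ} (hm : t ^ m ∣ a) :
    ∃ k, m ≤ k ∧ t ^ k ≠ 0 ∧ ∃ c : K, c ≠ 0 ∧ HasInitialTerm t a c k := by
  classical
  obtain ⟨N, hN⟩ := hnil
  have hbound : ∀ j, t ^ j ∣ a → j < N := fun j hj => by
    by_contra hjN
    exact ha (zero_dvd_iff.mp (pow_eq_zero_of_le (not_lt.mp hjN) hN ▸ hj))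
  set k := Nat.findGreatest (fun j => t ^ j ∣ a) N
  have hk : t ^ k ∣ a := Nat.findGreatest_spec (P := fun j => t ^ j ∣ a) (hbound m hm).le hm
  have hk1 : ¬ t ^ (k + 1) ∣ a := fun h =>
    Nat.findGreatest_is_greatest (Nat.lt_succ_self k) (hbound _ h).le h
  obtain ⟨b, hb⟩ := hk
  obtain ⟨c, r, hr⟩ := exists_hasInitialTerm_zero (K := K) ht b
  have hab : a - c • t ^ k = t ^ (k + 1) * r := by
    rw [zero_add, pow_one, pow_zero] at hr
    rw [hb, pow_succ, mul_assoc, ← hr, mul_sub, mul_smul_comm, mul_one]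
  refine ⟨k, Nat.le_findGreatest (hbound m hm).le hm, left_ne_zero_of_mul (hb ▸ ha), c, ?_, r, hab⟩
  rintro rfl
  exact hk1 ⟨r, by rw [← hab, zero_smul, sub_zero]⟩

end InitialTerm

namespace TruncPoly

variable (K : Type*) [Field K] (p : ℕ)

noncomputable def gen : TruncPoly K 1 p :=
  Ideal.Quotient.mk _ (MvPolynomial.X 0)

variable {K p}

theorem truncationIdeal_one :
    truncationIdeal K 1 p = Ideal.span {(MvPolynomial.X 0 : MvPolynomial (Fin 1) K) ^ p} := by
  rw [truncationIdeal, Set.range_unique]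
  rfl

theorem gen_pow_eq_zero_iff {k : ℕ} : gen K p ^ k = 0 ↔ p ≤ k := by
  rw [gen, ← map_pow, Ideal.Quotient.eq_zero_iff_mem, truncationIdeal_one,
    Ideal.mem_span_singleton]
  exact pow_dvd_pow_iff MvPolynomial.X_prime.ne_zero MvPolynomial.X_prime.not_isUnit

theorem gen_pow_ne_zero {k : ℕ} (hk : k < p) : gen K p ^ k ≠ 0 :=
  fun h => (gen_pow_eq_zero_iff.mp h).not_gt hk

theorem isNilpotent_gen : IsNilpotent (gen K p) :=
  ⟨p, gen_pow_eq_zero_iff.mpr le_rfl⟩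

theorem adjoin_gen : Algebra.adjoin K {gen K p} = ⊤ := by
  have h := AlgHom.map_adjoin (Ideal.Quotient.mkₐ K (truncationIdeal K 1 p))
    (Set.range (MvPolynomial.X : Fin 1 → MvPolynomial (Fin 1) K))
  rw [MvPolynomial.adjoin_range_X, Algebra.map_top,
    (AlgHom.range_eq_top _).mpr (Ideal.Quotient.mkₐ_surjective K _), Set.range_unique,
    Set.image_singleton] at h
  exact h.symm

variable [CharP K p]

noncomputable def derivative : Derivation K (TruncPoly K 1 p) (TruncPoly K 1 p) :=
  (MvPolynomial.pderiv 0).liftOfSurjective (Ideal.Quotient.mkₐ_surjective K _) fun f hf => by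
    rw [Ideal.Quotient.mkₐ_eq_mk, Ideal.Quotient.eq_zero_iff_mem, truncationIdeal_one,
      Ideal.mem_span_singleton] at hf ⊢
    obtain ⟨g, rfl⟩ := hf
    have hXp : MvPolynomial.pderiv 0 ((MvPolynomial.X 0 : MvPolynomial (Fin 1) K) ^ p) = 0 := by
      rw [Derivation.leibniz_pow, nsmul_eq_mul, CharP.cast_eq_zero, zero_mul]
    rw [Derivation.leibniz, hXp, smul_zero, add_zero, smul_eq_mul]
    exact dvd_mul_right _ _

theorem derivative_gen : derivative (gen K p) = 1 := by
  rw [gen, ← Ideal.Quotient.mkₐ_eq_mk K, derivative, Derivation.liftOfSurjective_apply,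
    MvPolynomial.pderiv_X_self, map_one]

theorem derivation_eq_smul_derivative (d : Derivation K (TruncPoly K 1 p) (TruncPoly K 1 p)) :
    d = d (gen K p) • derivative :=
  Derivation.ext_of_adjoin_eq_top _ adjoin_gen fun _ h => by
    rw [Set.mem_singleton_iff.mp h, Derivation.smul_apply, derivative_gen, smul_eq_mul, mul_one]

theorem apply_eq_mul_derivative (d : Derivation K (TruncPoly K 1 p) (TruncPoly K 1 p))
    (a : TruncPoly K 1 p) : d a = d (gen K p) * derivative a := by
  conv_lhs => rw [derivation_eq_smul_derivative d]
  rfl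

theorem lie_apply_gen (d e : Derivation K (TruncPoly K 1 p) (TruncPoly K 1 p)) :
    ⁅d, e⁆ (gen K p) =
      d (gen K p) * derivative (e (gen K p)) - e (gen K p) * derivative (d (gen K p)) := by
  rw [Derivation.commutator_apply, apply_eq_mul_derivative d (e (gen K p)),
    apply_eq_mul_derivative e (d (gen K p))]

theorem eq_zero_of_isNilpotent_of_hasInitialTerm_one (hp : 1 < p)
    {d : Derivation K (TruncPoly K 1 p) (TruncPoly K 1 p)} (hd : IsNilpotent d.toLinearMap)
    {c : K} (hc : HasInitialTerm (gen K p) (d (gen K p)) c 1) : c = 0 := by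
  have hpow : ∀ n, HasInitialTerm (gen K p) ((d.toLinearMap ^ n) (gen K p)) (c ^ n) 1 := by
    intro n
    induction n with
    | zero => simp [HasInitialTerm]
    | succ n ih =>
      rw [pow_succ', Module.End.mul_apply, Derivation.coeFn_coe, apply_eq_mul_derivative]
      convert hc.mul (ih.derivation derivative_gen) using 1
      simp [pow_succ, mul_comm]
  obtain ⟨N, hN⟩ := hd
  have h0 := hpow N
  rw [hN, LinearMap.zero_apply] at h0
  have := h0.unique isNilpotent_gen (gen_pow_ne_zero hp)
    (hasInitialTerm_zero_iff.mpr (dvd_zero _))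
  exact pow_eq_zero_iff'.mp this |>.1

theorem hasInitialTerm_lie_apply_gen {d e : Derivation K (TruncPoly K 1 p) (TruncPoly K 1 p)}
    {c₀ c : K} {k : ℕ} (hd : HasInitialTerm (gen K p) (d (gen K p)) c₀ 0)
    (he : HasInitialTerm (gen K p) (e (gen K p)) c (k + 2)) :
    HasInitialTerm (gen K p) (⁅d, e⁆ (gen K p)) ((k + 2 : ℕ) * c * c₀) (k + 1) := by
  have hsmall : HasInitialTerm (gen K p) (e (gen K p) * derivative (d (gen K p))) (0 : K) (k + 1) :=
    hasInitialTerm_zero_iff.mpr (he.pow_dvd.mul_right _)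
  have hmain := hd.mul (HasInitialTerm.derivation (k := k + 1) he derivative_gen)
  rw [zero_add] at hmain
  rw [lie_apply_gen]
  convert hmain.sub hsmall using 1
  push_cast
  ring

variable {D : LieSubalgebra K (Derivation K (TruncPoly K 1 p) (TruncPoly K 1 p))}

theorem exists_mem_not_gen_dvd (hp : 1 < p)
    (hirr : ∀ I : Ideal (TruncPoly K 1 p),
      (∀ d ∈ D, ∀ a ∈ I, Derivation.toLinearMap d a ∈ I) → I = ⊥ ∨ I = ⊤) :
    ∃ d ∈ D, ¬ gen K p ∣ d (gen K p) := by
  by_contra! h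
  have hinv : ∀ d ∈ D, ∀ a ∈ Ideal.span {gen K p},
      Derivation.toLinearMap d a ∈ Ideal.span {gen K p} := fun d hd a _ => by
    rw [Derivation.coeFn_coe, apply_eq_mul_derivative, Ideal.mem_span_singleton]
    exact (h d hd).mul_right _
  have hgen : gen K p ≠ 0 := by simpa using gen_pow_ne_zero (K := K) hp
  have : Nontrivial (TruncPoly K 1 p) := nontrivial_of_ne _ _ hgen
  rcases hirr _ hinv with hbot | htop
  · exact hgen (Ideal.span_singleton_eq_bot.mp hbot)
  · exact isNilpotent_gen.not_isUnit (Ideal.span_singleton_eq_top.mp htop)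

theorem eq_zero_of_mem_of_hasInitialTerm_succ (hp : 1 < p)
    (hnil : ∀ d ∈ D, IsNilpotent (Derivation.toLinearMap d))
    {d₀ : Derivation K (TruncPoly K 1 p) (TruncPoly K 1 p)} (hd₀ : d₀ ∈ D) {c₀ : K} (hc₀ : c₀ ≠ 0)
    (h₀ : HasInitialTerm (gen K p) (d₀ (gen K p)) c₀ 0) (k : ℕ) :
    ∀ e ∈ D, ∀ c : K, gen K p ^ (k + 1) ≠ 0 →
      HasInitialTerm (gen K p) (e (gen K p)) c (k + 1) → c = 0 := by
  induction k with
  | zero => exact fun e he c _ hc => eq_zero_of_isNilpotent_of_hasInitialTerm_one hp (hnil e he) hc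
  | succ k ih =>
    intro e he c hk hc
    have hkp : k + 2 < p := not_le.mp (mt gen_pow_eq_zero_iff.mpr hk)
    have hcast : ((k + 2 : ℕ) : K) ≠ 0 := by
      rw [Ne, CharP.cast_eq_zero_iff K p]
      exact fun hdvd => absurd (Nat.le_of_dvd (by omega) hdvd) (by omega)
    have := ih _ (D.lie_mem hd₀ he) _ (gen_pow_ne_zero (by omega))
      (hasInitialTerm_lie_apply_gen h₀ hc)
    exact (mul_eq_zero.mp ((mul_eq_zero.mp this).resolve_right hc₀)).resolve_left hcast

theorem eq_zero_of_gen_dvd (hp : 1 < p) (hnil : ∀ d ∈ D, IsNilpotent (Derivation.toLinearMap d))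
    {d₀ : Derivation K (TruncPoly K 1 p) (TruncPoly K 1 p)} (hd₀ : d₀ ∈ D)
    (h₀ : ¬ gen K p ∣ d₀ (gen K p)) {e : Derivation K (TruncPoly K 1 p) (TruncPoly K 1 p)}
    (he : e ∈ D) (hdvd : gen K p ∣ e (gen K p)) : e = 0 := by
  obtain ⟨c₀, hc₀ne, hc₀⟩ := exists_hasInitialTerm_zero_of_not_dvd adjoin_gen h₀
  by_contra hne
  have het : e (gen K p) ≠ 0 := fun h =>
    hne <| Derivation.ext fun a => by
      rw [apply_eq_mul_derivative, h, zero_mul, Derivation.zero_apply]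
  obtain ⟨_ | k, hk1, hk, c, hc, hec⟩ :=
    exists_hasInitialTerm_of_pow_dvd adjoin_gen isNilpotent_gen het (m := 1) (by simpa using hdvd)
  · omega
  · exact hc (eq_zero_of_mem_of_hasInitialTerm_succ hp hnil hd₀ hc₀ne hc₀ k e he c hk hec)

theorem exists_smul_eq_of_mem (hp : 1 < p) (hnil : ∀ d ∈ D, IsNilpotent (Derivation.toLinearMap d))
    {d₀ : Derivation K (TruncPoly K 1 p) (TruncPoly K 1 p)} (hd₀ : d₀ ∈ D)
    (h₀ : ¬ gen K p ∣ d₀ (gen K p)) {d : Derivation K (TruncPoly K 1 p) (TruncPoly K 1 p)}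
    (hd : d ∈ D) : ∃ c : K, c • d₀ = d := by
  obtain ⟨c₀, hc₀ne, hc₀⟩ := exists_hasInitialTerm_zero_of_not_dvd adjoin_gen h₀
  obtain ⟨c, hc⟩ := exists_hasInitialTerm_zero adjoin_gen (d (gen K p))
  refine ⟨c / c₀, (sub_eq_zero.mp (eq_zero_of_gen_dvd hp hnil hd₀ h₀
    (D.sub_mem hd (D.smul_mem (c / c₀) hd₀)) ?_)).symm⟩
  have := hc.sub (hc₀.smul (c / c₀))
  rw [div_mul_cancel₀ c hc₀ne, sub_self, hasInitialTerm_zero_iff, zero_add, pow_one] at this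
  simpa using this

end TruncPoly

/-- Every Lie subalgebra `D` of `Der(O₁)`, `O₁ = K[x]/(x^p)`, consisting of nilpotent
derivations and such that `O₁` has no nonzero proper `D`-invariant ideal, has dimension at
most `1`; in particular `dim D < p`. -/
theorem dim_nilpotent_transitive_subalgebra_one_var
    (K : Type*) [Field K] (p : ℕ) (hp : p.Prime) [CharP K p]
    (D : LieSubalgebra K (Derivation K (TruncPoly K 1 p) (TruncPoly K 1 p)))
    (hnil : ∀ d ∈ D, IsNilpotent (Derivation.toLinearMap d))
    (hirr : ∀ I : Ideal (TruncPoly K 1 p),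
      (∀ d ∈ D, ∀ a ∈ I, Derivation.toLinearMap d a ∈ I) → I = ⊥ ∨ I = ⊤) :
    Module.finrank K D ≤ 1 ∧ Module.finrank K D < p := by
  obtain ⟨d₀, hd₀, h₀⟩ := TruncPoly.exists_mem_not_gen_dvd hp.one_lt hirr
  have hrank : Module.finrank K D ≤ 1 := finrank_le_one ⟨d₀, hd₀⟩ fun d => by
    obtain ⟨c, hc⟩ := TruncPoly.exists_smul_eq_of_mem hp.one_lt hnil hd₀ h₀ d.2
    exact ⟨c, Subtype.ext hc⟩
  exact ⟨hrank, hrank.trans_lt hp.one_lt⟩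
end

section
/- Let K be a field of characteristic p > 0, O = Oₘ the truncated polynomial algebra, d ∈ Der(O) a derivation, and g ∈ O. If the operator d + R_g on O is nilpotent (where R_g is multiplication by g), then d^{p^k} = 0 for some k; i.e., d is a nilpotent derivation. -/
variable {p : ℕ}

theorem Commute.add_pow_prime_of_natCast_eq_zero {R : Type*} [Semiring R] {x y : R}
    (hp : p.Prime) (hR : (p : R) = 0) (h : Commute x y) : (x + y) ^ p = x ^ p + y ^ p := by
  rw [h.add_pow_prime_eq' hp, hR, zero_mul, add_zero]

open LinearMap

theorem pow_prime_mul_eq_mul_pow_prime_add_mulLeft_sub_mulRight_pow {K E : Type*}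
    [CommRing K] [Ring E] [Algebra K E] (hp : p.Prime) (hK : (p : K) = 0) (x y : E) :
    x ^ p * y = y * x ^ p + ((mulLeft K x - mulRight K x) ^ p) y := by
  have hEnd : (p : Module.End K E) = 0 := by
    rw [← map_natCast (algebraMap K _), hK, map_zero]
  have hcomm : Commute (mulLeft K x - mulRight K x) (mulRight K x) :=
    (commute_mulLeft_right x x).sub_left (Commute.refl _)
  have hsplit := hcomm.add_pow_prime_of_natCast_eq_zero hp hEnd
  rw [sub_add_cancel, pow_mulLeft, pow_mulRight] at hsplit
  have := congrArg (· y) hsplit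
  simpa [add_comm] using this

section TwistedLeibniz

variable {K A : Type*} [CommRing K] [Ring A] [Algebra K A] {D L : Module.End K A}

theorem mulLeft_sub_mulRight_apply_mulLeft_of_leibniz
    (hDL : ∀ a b, L (a * b) = D a * b + a * L b) (a : A) :
    (mulLeft K L - mulRight K L) (mulLeft K a) = mulLeft K (D a) := by
  ext b
  simp [hDL]

theorem mulLeft_sub_mulRight_pow_apply_mulLeft_of_leibniz
    (hDL : ∀ a b, L (a * b) = D a * b + a * L b) (n : ℕ) (a : A) :
    ((mulLeft K L - mulRight K L) ^ n) (mulLeft K a) = mulLeft K ((D ^ n) a) := by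
  induction n with
  | zero => simp
  | succ n ih =>
    rw [pow_succ', Module.End.mul_apply, ih, mulLeft_sub_mulRight_apply_mulLeft_of_leibniz hDL,
      pow_succ', Module.End.mul_apply]

theorem pow_prime_apply_mul_of_leibniz (hp : p.Prime) (hK : (p : K) = 0)
    (hDL : ∀ a b, L (a * b) = D a * b + a * L b) (a b : A) :
    (L ^ p) (a * b) = (D ^ p) a * b + a * (L ^ p) b := by
  have := congrArg (· b)
    (pow_prime_mul_eq_mul_pow_prime_add_mulLeft_sub_mulRight_pow hp hK L (mulLeft K a))
  simpa [mulLeft_sub_mulRight_pow_apply_mulLeft_of_leibniz hDL, add_comm] using this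

theorem pow_prime_pow_apply_mul_of_leibniz (hp : p.Prime) (hK : (p : K) = 0)
    (hDL : ∀ a b, L (a * b) = D a * b + a * L b) (k : ℕ) (a b : A) :
    (L ^ p ^ k) (a * b) = (D ^ p ^ k) a * b + a * (L ^ p ^ k) b := by
  induction k generalizing a b with
  | zero => simpa using hDL a b
  | succ k ih =>
    simp only [pow_succ, pow_mul]
    exact pow_prime_apply_mul_of_leibniz hp hK ih a b

theorem exists_pow_prime_pow_eq_zero_of_leibniz (hp : p.Prime) (hK : (p : K) = 0)
    (hDL : ∀ a b, L (a * b) = D a * b + a * L b) (hL : IsNilpotent L) :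
    ∃ k : ℕ, D ^ p ^ k = 0 := by
  obtain ⟨k, hk⟩ := hL
  have hLk : L ^ p ^ k = 0 := pow_eq_zero_of_le (Nat.lt_pow_self hp.one_lt).le hk
  refine ⟨k, LinearMap.ext fun a => ?_⟩
  simpa [hLk] using (pow_prime_pow_apply_mul_of_leibniz hp hK hDL k a 1).symm

end TwistedLeibniz

/-- If `d` is a derivation of `O = Oₘ` and `g ∈ O` is such that the operator `d + R_g`
(`R_g` = multiplication by `g`) is nilpotent, then `d^{p^k} = 0` for some `k`;
i.e. `d` is a nilpotent derivation. -/
theorem derivation_nilpotent_of_sum_with_mul_nilpotent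
    (K : Type*) [Field K] (p m : ℕ) (hp : p.Prime) [CharP K p]
    (d : Derivation K (TruncPoly K m p) (TruncPoly K m p)) (g : TruncPoly K m p)
    (h : IsNilpotent (Derivation.toLinearMap d + LinearMap.mulLeft K g)) :
    ∃ k : ℕ, Derivation.toLinearMap d ^ p ^ k = 0 := by
  refine exists_pow_prime_pow_eq_zero_of_leibniz hp (CharP.cast_eq_zero K p) (fun a b => ?_) h
  simp only [LinearMap.add_apply, Derivation.coeFn_coe, mulLeft_apply, d.leibniz, smul_eq_mul]
  ring
end

section
/- Let L be a Lie algebra whose derived subalgebra [L, L] is nilpotent, and let H be a Cartan subalgebra of L. Then L = H + [L, L] is a decomposition of L into a sum of two nilpotent subalgebras. -/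
/-! The Fitting decomposition of `L` under the nilpotent algebra `H` is `L = L₀ ⊕ L₊`, where
`L₀ = H` because `H` is a Cartan subalgebra, and `L₊ ⊆ ⁅H, L⁆ ⊆ ⁅L, L⁆` since `L₊` is contained in
every term of the lower central series of `L` as an `H`-module. -/

open LieModule LieAlgebra

namespace LieSubalgebra

variable {R L : Type*} [CommRing R] [LieRing L] [LieAlgebra R L] (H : LieSubalgebra R L)

lemma lowerCentralSeries_one_le_restr_derivedSeries_one :
    lowerCentralSeries R H L 1 ≤ (derivedSeries R L 1).restr H := by
  rw [lowerCentralSeries_succ, lowerCentralSeries_zero, LieSubmodule.lie_le_iff]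
  intro x _ m _
  rw [derivedSeries_def, derivedSeriesOfIdeal_succ, derivedSeriesOfIdeal_zero]
  exact LieSubmodule.lie_mem_lie (LieSubmodule.mem_top (x : L)) (LieSubmodule.mem_top m)

lemma rootSpace_zero_sup_restr_derivedSeries_one_eq_top [LieRing.IsNilpotent H]
    [IsNoetherian R L] [IsArtinian R L] :
    rootSpace H 0 ⊔ (derivedSeries R L 1).restr H = ⊤ := by
  refine top_unique ?_
  rw [← (isCompl_genWeightSpace_zero_posFittingComp R H L).sup_eq_top]
  refine sup_le_sup_left ?_ _
  calc posFittingComp R H L ≤ lowerCentralSeries R H L 1 :=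
        (posFittingComp_le_iInf_lowerCentralSeries R H L).trans (iInf_le _ 1)
    _ ≤ (derivedSeries R L 1).restr H := lowerCentralSeries_one_le_restr_derivedSeries_one H

end LieSubalgebra

/-- If the derived subalgebra `[L,L]` of a finite-dimensional Lie algebra `L` is nilpotent
and `H` is a Cartan subalgebra, then `L = H + [L,L]` is a decomposition of `L` into a sum
of two nilpotent subalgebras. -/
theorem cartan_add_derived_of_nilpotent_derived
    (K : Type*) [Field K]
    (L : Type*) [LieRing L] [LieAlgebra K L] [FiniteDimensional K L]
    (hder : LieRing.IsNilpotent (LieAlgebra.derivedSeries K L 1))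
    (H : LieSubalgebra K L) (hH : H.IsCartanSubalgebra) :
    (∀ x : L, ∃ a ∈ H, ∃ b ∈ LieAlgebra.derivedSeries K L 1, x = a + b) ∧
    LieRing.IsNilpotent H ∧
    LieRing.IsNilpotent (LieAlgebra.derivedSeries K L 1) := by
  refine ⟨fun x ↦ ?_, hH.nilpotent, hder⟩
  have hx : x ∈ H.toLieSubmodule ⊔ (derivedSeries K L 1).restr H := by
    rw [← rootSpace_zero_eq K L H, H.rootSpace_zero_sup_restr_derivedSeries_one_eq_top]
    exact LieSubmodule.mem_top x
  obtain ⟨a, ha, b, hb, rfl⟩ := (LieSubmodule.mem_sup _ _ _).mp hx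
  exact ⟨a, ha, b, hb, rfl⟩
end

section
/- Let K be a field of characteristic p > 2, let L be the two-dimensional non-abelian Lie algebra over K with basis {h, e}, [h,e] = e, and let V be a p-dimensional irreducible L-module. Then the semidirect product L ⋉ V cannot be written as a sum of two nilpotent Lie subalgebras. -/
/-!
Modulo the abelian ideal `V` the algebra is the two-dimensional non-abelian `L`, in which
nilpotent subalgebras are at most one-dimensional. If `x` lies in a nilpotent subalgebra `N`
and has image `a h + b e ≠ 0` in `L`, then `ad x` is nilpotent on `N ∩ V`, while on `V` it acts
as `a • diag(0, 1, …, p - 1) + b • (cyclic shift)`: injective if `b ≠ 0`, with generalized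
kernel `K v₀` if `b = 0`. Hence `dim N ≤ 2`. If `g = A + B` with `A`, `B` nilpotent, the
`h`-component of `h` forces one of them, say `A`, to contain such an `x` with `a ≠ 0`. Then
`B ⊄ V` gives `dim g ≤ 4 < p + 2`, while `B ⊆ V` puts `e` in `A + V`, so the image of `A`
in `L` contains both `x` and `e`, which are independent.
-/

open Module LieAlgebra

theorem Module.Basis.coord_apply_basis {ι R M : Type*} [Semiring R] [AddCommMonoid M]
    [Module R M] [DecidableEq ι] (b : Basis ι R M) (i j : ι) :
    b.coord i (b j) = if j = i then 1 else 0 := by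
  rw [Basis.coord_apply, Basis.repr_self, Finsupp.single_apply]

theorem ZMod.forall_of_sub_one {n : ℕ} [NeZero n] {P : ZMod n → Prop} {j₀ : ZMod n}
    (h₀ : P j₀) (hstep : ∀ j, P j → P (j - 1)) (j : ZMod n) : P j := by
  have (k : ℕ) : P (j₀ - k) := by
    induction k with
    | zero => simpa using h₀
    | succ k ih => simpa [sub_sub] using hstep _ ih
  simpa using this (j₀ - j).val

section

variable {K : Type*} [Field K] {g : Type*} [LieRing g] [LieAlgebra K g]

theorem LieSubalgebra.exists_pow_ad_apply_eq_zero (N : LieSubalgebra K g) [LieRing.IsNilpotent N]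
    (x y : N) : ∃ n, (ad K g x ^ n) y = 0 := by
  obtain ⟨n, hn⟩ := LieModule.isNilpotent_toEnd_of_isNilpotent K N N x
  refine ⟨n, ?_⟩
  rw [← N.coe_ad_pow]
  exact congrArg Subtype.val (LinearMap.congr_fun hn y)

theorem mul_eq_mul_of_isNilpotent (φ ψ : g →ₗ[K] K) (hφ : ∀ x y : g, φ ⁅x, y⁆ = 0)
    (hψ : ∀ x y : g, ψ ⁅x, y⁆ = φ x * ψ y - φ y * ψ x)
    (N : LieSubalgebra K g) [LieRing.IsNilpotent N] (x y : N) :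
    φ x * ψ y = φ y * ψ x := by
  have ψ_pow_ad (x : g) (n : ℕ) :
      ∀ w, φ w = 0 → ψ ((ad K g x ^ n) w) = φ x ^ n * ψ w := by
    induction n with
    | zero => simp
    | succ n ih =>
      intro w hw
      rw [pow_succ, Module.End.mul_apply, ad_apply, ih _ (hφ x w), hψ, hw]
      ring
  have of_ne_zero (x y : N) (hx : φ x ≠ 0) : φ x * ψ y = φ y * ψ x := by
    obtain ⟨n, hn⟩ := N.exists_pow_ad_apply_eq_zero x ⁅x, y⁆
    rw [LieSubalgebra.coe_bracket] at hn
    have := ψ_pow_ad x n _ (hφ x y)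
    rw [hn, map_zero, eq_comm, mul_eq_zero, hψ, sub_eq_zero] at this
    exact this.resolve_left (pow_ne_zero n hx)
  by_cases hx : φ x = 0
  · by_cases hy : φ y = 0
    · rw [hx, hy, zero_mul, zero_mul]
    · exact (of_ne_zero y x hy).symm
  · exact of_ne_zero x y hx

/-- Coordinates on `g = K h ⊕ K e ⊕ V`: `φ x` and `ψ x` are the `h`- and `e`-components of
`x`, and `κ j x` its `vⱼ`-component, so that `ad h` and `ad e` act on `V` as
`diag(0, 1, …, p - 1)` and as the cyclic shift `vⱼ ↦ vⱼ₊₁`. -/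
structure SemidirectCoords (p : ℕ) [CharP K p] (V : LieIdeal K g) (h e : g) where
  φ : g →ₗ[K] K
  ψ : g →ₗ[K] K
  κ : ZMod p → g →ₗ[K] K
  lie_h_e : ⁅h, e⁆ = e
  lie_eq_zero : ∀ u ∈ V, ∀ w ∈ V, ⁅u, w⁆ = 0
  φ_h : φ h = 1
  φ_e : φ e = 0
  ψ_e : ψ e = 1
  φ_eq_zero : ∀ u ∈ V, φ u = 0
  ψ_eq_zero : ∀ u ∈ V, ψ u = 0
  sub_mem : ∀ x, x - (φ x • h + ψ x • e) ∈ V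
  κ_lie_h : ∀ j, ∀ u ∈ V, κ j ⁅h, u⁆ = ZMod.castHom (dvd_refl p) K j * κ j u
  κ_lie_e : ∀ j, ∀ u ∈ V, κ j ⁅e, u⁆ = κ (j - 1) u
  eq_zero_of_κ : ∀ u ∈ V, (∀ j, κ j u = 0) → u = 0

namespace SemidirectCoords

variable {p : ℕ} {V : LieIdeal K g} {h e : g}

section

variable [CharP K p] (c : SemidirectCoords p V h e)

theorem lie_sub_smul_mem (x y : g) :
    ⁅x, y⁆ - (c.φ x * c.ψ y - c.φ y * c.ψ x) • e ∈ V := by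
  set x' := c.φ x • h + c.ψ x • e
  set y' := c.φ y • h + c.ψ y • e
  have hx'y' : ⁅x', y'⁆ = (c.φ x * c.ψ y - c.φ y * c.ψ x) • e := by
    have : ⁅e, h⁆ = -e := by rw [← lie_skew, c.lie_h_e]
    simp only [x', y', add_lie, lie_add, smul_lie, lie_smul, lie_self, c.lie_h_e, this]
    module
  have hsplit : ⁅x, y⁆ - ⁅x', y'⁆ = ⁅x - x', y⁆ + ⁅x', y - y'⁆ := by
    simp only [sub_lie, lie_sub]
    abel
  rw [← hx'y', ← sub_add_cancel ⁅x, y⁆ ⁅x', y'⁆, hsplit, add_sub_cancel_right]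
  exact add_mem (lie_mem_left K g V _ _ (c.sub_mem x)) (lie_mem_right K g V _ _ (c.sub_mem y))

theorem φ_lie (x y : g) : c.φ ⁅x, y⁆ = 0 := by
  have := c.φ_eq_zero _ (c.lie_sub_smul_mem x y)
  rwa [map_sub, map_smul, c.φ_e, smul_zero, sub_zero] at this

theorem ψ_lie (x y : g) : c.ψ ⁅x, y⁆ = c.φ x * c.ψ y - c.φ y * c.ψ x := by
  have := c.ψ_eq_zero _ (c.lie_sub_smul_mem x y)
  rwa [map_sub, map_smul, c.ψ_e, smul_eq_mul, mul_one, sub_eq_zero] at this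

theorem mem_of_φ_eq_zero_of_ψ_eq_zero {x : g} (hφ : c.φ x = 0) (hψ : c.ψ x = 0) :
    x ∈ V := by
  simpa [hφ, hψ] using c.sub_mem x

theorem κ_lie (j : ZMod p) (x : g) {u : g} (hu : u ∈ V) :
    c.κ j ⁅x, u⁆ =
      c.φ x * ZMod.castHom (dvd_refl p) K j * c.κ j u + c.ψ x * c.κ (j - 1) u := by
  have hx : ⁅x, u⁆ = c.φ x • ⁅h, u⁆ + c.ψ x • ⁅e, u⁆ := by
    have := c.lie_eq_zero _ (c.sub_mem x) u hu
    rwa [sub_lie, add_lie, smul_lie, smul_lie, sub_eq_zero] at this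
  rw [hx, map_add, map_smul, map_smul, c.κ_lie_h j u hu, c.κ_lie_e j u hu, smul_eq_mul,
    smul_eq_mul, mul_assoc]

theorem κ_pow_ad {x : g} (hx : c.ψ x = 0) (j : ZMod p) (n : ℕ) {u : g} (hu : u ∈ V) :
    c.κ j ((ad K g x ^ n) u) = (c.φ x * ZMod.castHom (dvd_refl p) K j) ^ n * c.κ j u := by
  induction n generalizing u with
  | zero => simp
  | succ n ih =>
    rw [pow_succ, Module.End.mul_apply, ad_apply, ih (V.lie_mem hu), c.κ_lie j x hu, hx]
    ring

theorem κ_eq_zero_of_pow_ad_eq_zero {x : g} (hφ : c.φ x ≠ 0) (hψ : c.ψ x = 0) {j : ZMod p}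
    (hj : j ≠ 0) (n : ℕ) {u : g} (hu : u ∈ V) (hn : (ad K g x ^ n) u = 0) : c.κ j u = 0 := by
  have hj' : ZMod.castHom (dvd_refl p) K j ≠ 0 :=
    (map_ne_zero_iff _ (ZMod.castHom_injective K)).mpr hj
  have := c.κ_pow_ad hψ j n hu
  rw [hn, map_zero, eq_comm, mul_eq_zero] at this
  exact this.resolve_left (pow_ne_zero n (mul_ne_zero hφ hj'))

variable [NeZero p]

theorem eq_zero_of_lie_eq_zero {x : g} (hx : c.ψ x ≠ 0) {u : g} (hu : u ∈ V)
    (hxu : ⁅x, u⁆ = 0) : u = 0 := by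
  have hκ (j : ZMod p) : c.κ j u = 0 → c.κ (j - 1) u = 0 := by
    intro hj
    have := c.κ_lie j x hu
    rw [hxu, map_zero, hj, mul_zero, zero_add, eq_comm, mul_eq_zero] at this
    exact this.resolve_left hx
  refine c.eq_zero_of_κ u hu (ZMod.forall_of_sub_one (j₀ := -1) ?_ hκ)
  have := c.κ_lie 0 x hu
  rwa [hxu, map_zero, map_zero, mul_zero, zero_mul, zero_add, zero_sub, eq_comm,
    mul_eq_zero, or_iff_right hx] at this

theorem eq_zero_of_pow_ad_eq_zero {x : g} (hx : c.ψ x ≠ 0) (n : ℕ) {u : g} (hu : u ∈ V)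
    (hn : (ad K g x ^ n) u = 0) : u = 0 := by
  induction n generalizing u with
  | zero => simpa using hn
  | succ n ih =>
    rw [pow_succ, Module.End.mul_apply, ad_apply] at hn
    exact c.eq_zero_of_lie_eq_zero hx hu (ih (V.lie_mem hu) hn)

theorem finrank_le_two [FiniteDimensional K g] (N : LieSubalgebra K g) [LieRing.IsNilpotent N]
    (x₀ : N) (hx₀ : c.φ x₀ ≠ 0 ∨ c.ψ x₀ ≠ 0) : finrank K N ≤ 2 := by
  let f : N →ₗ[K] K × K := (c.φ.prod c.ψ) ∘ₗ (N.incl : N →ₗ[K] g)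
  have hf (y : N) : f y = (c.φ y, c.ψ y) := rfl
  have hrange : finrank K (LinearMap.range f) ≤ 1 := by
    refine (Submodule.finrank_mono (t := K ∙ (c.φ x₀, c.ψ x₀)) ?_).trans
      ((finrank_span_le_card _).trans (by simp))
    rintro _ ⟨y, rfl⟩
    have hpar := mul_eq_mul_of_isNilpotent c.φ c.ψ c.φ_lie c.ψ_lie N x₀ y
    rw [Submodule.mem_span_singleton, hf]
    rcases hx₀ with hx₀ | hx₀
    · refine ⟨c.φ y / c.φ x₀, ?_⟩
      rw [Prod.smul_mk, smul_eq_mul, smul_eq_mul, Prod.mk.injEq]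
      constructor <;> field_simp
      linear_combination -hpar
    · refine ⟨c.ψ y / c.ψ x₀, ?_⟩
      rw [Prod.smul_mk, smul_eq_mul, smul_eq_mul, Prod.mk.injEq]
      constructor <;> field_simp
      linear_combination hpar
  have hker : finrank K (LinearMap.ker f) ≤ 1 := by
    let κ₀ : LinearMap.ker f →ₗ[K] K :=
      c.κ 0 ∘ₗ (N.incl : N →ₗ[K] g) ∘ₗ (LinearMap.ker f).subtype
    have hinj : Function.Injective κ₀ := by
      rw [← LinearMap.ker_eq_bot, LinearMap.ker_eq_bot']
      rintro ⟨z, hz⟩ hz₀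
      have hzV := c.mem_of_φ_eq_zero_of_ψ_eq_zero (congrArg Prod.fst hz) (congrArg Prod.snd hz)
      obtain ⟨n, hn⟩ := N.exists_pow_ad_apply_eq_zero x₀ z
      ext
      by_cases hψ : c.ψ x₀ = 0
      · refine c.eq_zero_of_κ _ hzV fun j => ?_
        by_cases hj : j = 0
        · subst hj; exact hz₀
        · exact c.κ_eq_zero_of_pow_ad_eq_zero (hx₀.resolve_right (not_not.mpr hψ)) hψ hj n
            hzV hn
      · exact c.eq_zero_of_pow_ad_eq_zero hψ n hzV hn
    simpa using LinearMap.finrank_le_finrank_of_injective hinj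
  have := LinearMap.finrank_range_add_finrank_ker f
  omega

theorem sup_ne_top_of_φ_ne_zero [FiniteDimensional K g] (hdim : 4 < finrank K g)
    (A B : LieSubalgebra K g) [LieRing.IsNilpotent A] [LieRing.IsNilpotent B] {x₀ : g}
    (hx₀A : x₀ ∈ A) (hx₀ : c.φ x₀ ≠ 0) : A.toSubmodule ⊔ B.toSubmodule ≠ ⊤ := by
  intro hAB
  by_cases hBV : ∃ y : B, c.φ y ≠ 0 ∨ c.ψ y ≠ 0
  · obtain ⟨y, hy⟩ := hBV
    have := Submodule.finrank_add_le_finrank_add_finrank A.toSubmodule B.toSubmodule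
    rw [hAB, finrank_top] at this
    have : finrank K A.toSubmodule ≤ 2 := c.finrank_le_two A ⟨x₀, hx₀A⟩ (.inl hx₀)
    have : finrank K B.toSubmodule ≤ 2 := c.finrank_le_two B y hy
    omega
  · push Not at hBV
    obtain ⟨a, ha, b, hb, hab⟩ := Submodule.mem_sup.mp (hAB ▸ Submodule.mem_top : e ∈ _)
    have hbV := c.mem_of_φ_eq_zero_of_ψ_eq_zero (hBV ⟨b, hb⟩).1 (hBV ⟨b, hb⟩).2
    have hφa : c.φ a = 0 := by
      simpa [c.φ_e, c.φ_eq_zero b hbV] using congrArg c.φ hab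
    have hψa : c.ψ a = 1 := by
      simpa [c.ψ_e, c.ψ_eq_zero b hbV] using congrArg c.ψ hab
    have := mul_eq_mul_of_isNilpotent c.φ c.ψ c.φ_lie c.ψ_lie A ⟨x₀, hx₀A⟩ ⟨a, ha⟩
    simp only [hφa, hψa, mul_one, zero_mul] at this
    exact hx₀ this

theorem not_exists_isNilpotent_add (c : SemidirectCoords p V h e) [FiniteDimensional K g]
    (hdim : 4 < finrank K g) :
    ¬ ∃ A B : LieSubalgebra K g, LieRing.IsNilpotent A ∧ LieRing.IsNilpotent B ∧
      (∀ x : g, ∃ a ∈ A, ∃ b ∈ B, x = a + b) := by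
  rintro ⟨A, B, hA, hB, hsum⟩
  have hAB : A.toSubmodule ⊔ B.toSubmodule = ⊤ := (Submodule.sup_eq_top_iff _ _).mpr hsum
  obtain ⟨a, ha, b, hb, hab⟩ := Submodule.mem_sup.mp (hAB ▸ Submodule.mem_top : h ∈ _)
  have hφ : c.φ a + c.φ b = 1 := by rw [← map_add, hab, c.φ_h]
  by_cases hφa : c.φ a = 0
  · refine c.sup_ne_top_of_φ_ne_zero hdim B A hb ?_ (sup_comm A.toSubmodule _ ▸ hAB)
    rw [hφa, zero_add] at hφ
    exact hφ ▸ one_ne_zero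
  · exact c.sup_ne_top_of_φ_ne_zero hdim A B ha hφa hAB

end

section ofBasis

variable {v : ZMod p → g} {b : Basis (Fin 2 ⊕ ZMod p) K g}

theorem eqOn_of_eqOn_range (hVspan : V.toSubmodule = Submodule.span K (Set.range v))
    {F G : g →ₗ[K] K} (hFG : Set.EqOn F G (Set.range v)) : Set.EqOn F G V :=
  fun _ hu => LinearMap.eqOn_span' hFG (by rwa [← hVspan])

theorem coord_inl_eq_zero (hb : ⇑b = Sum.elim ![h, e] v)
    (hVspan : V.toSubmodule = Submodule.span K (Set.range v)) (i : Fin 2) {u : g} (hu : u ∈ V) :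
    b.coord (.inl i) u = 0 :=
  eqOn_of_eqOn_range hVspan (G := 0)
    (by rintro _ ⟨j, rfl⟩; simpa [hb] using b.coord_apply_basis (.inl i) (.inr j)) hu

variable (b) in
noncomputable def ofBasis [CharP K p] [NeZero p] (hb : ⇑b = Sum.elim ![h, e] v)
    (hhe : ⁅h, e⁆ = e) (hV : IsLieAbelian V)
    (hVspan : V.toSubmodule = Submodule.span K (Set.range v))
    (hev : ∀ i, ⁅e, v i⁆ = v (i + 1))
    (hhv : ∀ i, ⁅h, v i⁆ = ZMod.castHom (dvd_refl p) K i • v i) :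
    SemidirectCoords p V h e where
  φ := b.coord (.inl 0)
  ψ := b.coord (.inl 1)
  κ j := b.coord (.inr j)
  lie_h_e := hhe
  lie_eq_zero u hu w hw := congrArg Subtype.val (trivial_lie_zero V V ⟨u, hu⟩ ⟨w, hw⟩)
  φ_h := by simpa [hb] using b.coord_apply_basis (.inl 0) (.inl 0)
  φ_e := by simpa [hb] using b.coord_apply_basis (.inl 0) (.inl 1)
  ψ_e := by simpa [hb] using b.coord_apply_basis (.inl 1) (.inl 1)
  φ_eq_zero _ := coord_inl_eq_zero hb hVspan 0
  ψ_eq_zero _ := coord_inl_eq_zero hb hVspan 1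
  sub_mem x := by
    have hx : x - (b.coord (.inl 0) x • h + b.coord (.inl 1) x • e) =
        ∑ j, b.coord (.inr j) x • v j := by
      nth_rewrite 1 [← b.sum_repr x]
      simp [Fintype.sum_sum_type, Fin.sum_univ_two, hb]
    rw [hx]
    exact sum_mem fun j _ =>
      V.smul_mem _ (hVspan ▸ Submodule.subset_span ⟨j, rfl⟩ : v j ∈ V.toSubmodule)
  κ_lie_h j u hu := by
    refine eqOn_of_eqOn_range (F := b.coord (.inr j) ∘ₗ ad K g h)
      (G := ZMod.castHom (dvd_refl p) K j • b.coord (.inr j)) hVspan ?_ hu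
    rintro _ ⟨i, rfl⟩
    have hvi := b.coord_apply_basis (.inr j) (.inr i)
    simp only [hb, Sum.elim_inr, Sum.inr.injEq] at hvi
    simp only [LinearMap.comp_apply, ad_apply, hhv, map_smul, hvi, LinearMap.smul_apply,
      smul_eq_mul]
    split_ifs with hij <;> simp [hij]
  κ_lie_e j u hu := by
    refine eqOn_of_eqOn_range (F := b.coord (.inr j) ∘ₗ ad K g e) (G := b.coord (.inr (j - 1)))
      hVspan ?_ hu
    rintro _ ⟨i, rfl⟩
    have hvi (k : ZMod p) := b.coord_apply_basis (.inr k) (.inr i)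
    have hvi1 := b.coord_apply_basis (.inr j) (.inr (i + 1))
    simp only [hb, Sum.elim_inr, Sum.inr.injEq] at hvi hvi1
    simp only [LinearMap.comp_apply, ad_apply, hev, hvi, hvi1, eq_sub_iff_add_eq]
  eq_zero_of_κ u hu hκ := by
    rw [← b.forall_coord_eq_zero_iff]
    rintro (i | j)
    · exact coord_inl_eq_zero hb hVspan i hu
    · exact hκ j

end ofBasis

end SemidirectCoords

end

theorem two_dim_nonabelian_semidirect_not_sum_of_two_nilpotent_general
    (K : Type*) [Field K] (p : ℕ) [CharP K p] (hp2 : 2 < p)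
    (g : Type*) [LieRing g] [LieAlgebra K g]
    (H : LieSubalgebra K g) (V : LieIdeal K g)
    (hVab : IsLieAbelian V)
    (hdisj : H.toSubmodule ⊓ LieSubmodule.toSubmodule V = ⊥)
    (hdecomp : ∀ x : g, ∃ a ∈ H, ∃ b ∈ V, x = a + b)
    (h e : g)
    (hHspan : H.toSubmodule = Submodule.span K {h, e})
    (hHind : LinearIndependent K ![h, e])
    (hbr : ⁅h, e⁆ = e)
    (v : ZMod p → g)
    (hVspan : LieSubmodule.toSubmodule V = Submodule.span K (Set.range v))
    (hVind : LinearIndependent K v)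
    (hev : ∀ i : ZMod p, ⁅e, v i⁆ = v (i + 1))
    (hhv : ∀ i : ZMod p, ⁅h, v i⁆ = (ZMod.castHom (dvd_refl p) K i) • v i) :
    ¬ ∃ A B : LieSubalgebra K g, LieRing.IsNilpotent A ∧
        LieRing.IsNilpotent B ∧ (∀ x : g, ∃ a ∈ A, ∃ b ∈ B, x = a + b) := by
  have : NeZero p := ⟨by omega⟩
  have hHe : Set.range ![h, e] = {h, e} := by simp [Matrix.range_cons, Set.pair_comm]
  have hind : LinearIndependent K (Sum.elim ![h, e] v) := by
    refine hHind.sum_type hVind ?_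
    rw [hHe, ← hHspan, ← hVspan]
    exact disjoint_iff.mpr hdisj
  have hspan : ⊤ ≤ Submodule.span K (Set.range (Sum.elim ![h, e] v)) := by
    rw [Set.Sum.elim_range, Submodule.span_union, hHe, ← hHspan, ← hVspan,
      (Submodule.sup_eq_top_iff _ _).mpr hdecomp]
  let b := Basis.mk hind hspan
  have := Module.Finite.of_basis b
  have hdim : 4 < finrank K g := by
    rw [finrank_eq_card_basis b, Fintype.card_sum, Fintype.card_fin, ZMod.card]
    omega
  exact (SemidirectCoords.ofBasis b (Basis.coe_mk hind hspan) hbr hVab hVspan hev hhv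
    ).not_exists_isNilpotent_add hdim

/-- (Internal form.)  Let `K` have characteristic `p > 2`, let `g` be the semidirect product
of the two-dimensional non-abelian Lie algebra `H = ⟨h, e⟩`, `⁅h,e⁆ = e`, with the
`p`-dimensional irreducible `H`-module `V` with basis `v₀, …, v_{p-1}`, `⁅e, vᵢ⁆ = vᵢ₊₁`
(indices mod `p`), `⁅h, vᵢ⁆ = i · vᵢ`.  Then `g` cannot be written as a sum of two
nilpotent Lie subalgebras. -/
theorem two_dim_nonabelian_semidirect_not_sum_of_two_nilpotent
    (K : Type*) [Field K] (p : ℕ) (hp : p.Prime) [CharP K p] (hp2 : 2 < p)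
    (g : Type*) [LieRing g] [LieAlgebra K g] [FiniteDimensional K g]
    (H : LieSubalgebra K g) (V : LieIdeal K g)
    (hVab : IsLieAbelian V)
    (hdisj : H.toSubmodule ⊓ LieSubmodule.toSubmodule V = ⊥)
    (hdecomp : ∀ x : g, ∃ a ∈ H, ∃ b ∈ V, x = a + b)
    (h e : g) (hh : h ∈ H) (he : e ∈ H)
    (hHspan : H.toSubmodule = Submodule.span K {h, e})
    (hHind : LinearIndependent K ![h, e])
    (hbr : ⁅h, e⁆ = e)
    (v : ZMod p → g) (hv : ∀ i, v i ∈ V)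
    (hVspan : LieSubmodule.toSubmodule V = Submodule.span K (Set.range v))
    (hVind : LinearIndependent K v)
    (hev : ∀ i : ZMod p, ⁅e, v i⁆ = v (i + 1))
    (hhv : ∀ i : ZMod p, ⁅h, v i⁆ = (ZMod.castHom (dvd_refl p) K i) • v i) :
    ¬ ∃ A B : LieSubalgebra K g, LieRing.IsNilpotent A ∧
        LieRing.IsNilpotent B ∧ (∀ x : g, ∃ a ∈ A, ∃ b ∈ B, x = a + b) :=
  two_dim_nonabelian_semidirect_not_sum_of_two_nilpotent_general K p hp2 g H V hVab hdisj hdecomp h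
    e hHspan hHind hbr v hVspan hVind hev hhv
end

section
/- Every supersolvable finite-dimensional Lie algebra L (i.e., one admitting a chain of ideals of L with one-dimensional quotients) over a field K of characteristic p > 0 has nilpotent derived subalgebra; hence L can be written as a sum of two nilpotent subalgebras. -/
/-!
Each quotient `C (k+1) / C k` of the chain is a one-dimensional `L`-module, on which `L` acts by
scalars; so commutators act trivially there, and every `x ∈ [L, L]` maps `C (k+1)` into `C k`.
Hence `ad x` is nilpotent for `x ∈ [L, L]`, and `[L, L]` is nilpotent by Engel's theorem.

The second summand is a nilpotent `B` with `L = B + [L, L]`, found by induction on the dimension.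
If every Engel subalgebra is `L` itself, `L` is nilpotent. Otherwise pick `x` with
`E = engel K x ≠ L`: the Fitting decomposition of `ad x` gives `L = E ⊕ ⋂ₖ range (ad x ^ k)`, the
second summand lies in `range (ad x) ⊆ [L, L]`, so `E = B + [E, E]` yields `L = B + [L, L]`.
-/

open Module LieAlgebra LieModule LieSubalgebra

theorem Module.End.commute_of_finrank_eq_one {K V : Type*} [Field K] [AddCommGroup V]
    [Module K V] (h : finrank K V = 1) (f g : End K V) : Commute f g := by
  obtain ⟨c, rfl, -⟩ := f.existsUnique_eq_smul_id_of_finrank_eq_one h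
  exact (Commute.one_left g).smul_left c

theorem Module.End.pow_eq_zero_of_chain {R M : Type*} [Semiring R] [AddCommMonoid M]
    [Module R M] {n : ℕ} (C : Fin (n + 1) → Submodule R M) (h0 : C 0 = ⊥)
    (htop : C (Fin.last n) = ⊤) (f : End R M)
    (hf : ∀ i : Fin n, ∀ m ∈ C i.succ, f m ∈ C i.castSucc) : f ^ n = 0 := by
  have hpow : ∀ k : Fin (n + 1), ∀ m ∈ C k, (f ^ (k : ℕ)) m = 0 := by
    refine Fin.induction ?_ fun i ih m hm ↦ ?_
    · simp [h0]
    · rw [Fin.val_succ, pow_succ, Module.End.mul_apply]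
      exact ih _ (hf i m hm)
  ext m
  simpa using hpow (Fin.last n) m (htop ▸ Submodule.mem_top)

section LieModule

variable {K L M : Type*} [Field K] [LieRing L] [LieAlgebra K L]
  [AddCommGroup M] [Module K M] [LieRingModule L M] [LieModule K L M]

theorem LieModule.derivedSeries_one_le_ker_of_finrank_eq_one (h : finrank K M = 1) :
    derivedSeries K L 1 ≤ LieModule.ker K L M := by
  rw [derivedSeries_def, derivedSeriesOfIdeal_succ, derivedSeriesOfIdeal_zero,
    LieSubmodule.lie_le_iff]
  intro a _ b _
  rw [LieModule.mem_ker]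
  intro m
  rw [lie_lie, sub_eq_zero]
  exact LinearMap.congr_fun
    (Module.End.commute_of_finrank_eq_one h (toEnd K L M a) (toEnd K L M b)).eq m

theorem LieSubmodule.lie_mem_of_finrank_eq_succ {N₁ N₂ : LieSubmodule K L M} (hle : N₁ ≤ N₂)
    (hrank : finrank K N₂ = finrank K N₁ + 1) {x : L} (hx : x ∈ derivedSeries K L 1)
    {m : M} (hm : m ∈ N₂) : ⁅x, m⁆ ∈ N₁ := by
  have : FiniteDimensional K N₂ := Module.finite_of_finrank_pos (by omega)
  set N : LieSubmodule K L N₂ := N₁.comap N₂.incl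
  have hQ : finrank K (N₂ ⧸ N) = 1 := by
    have h1 := N.toSubmodule.finrank_quotient_add_finrank
    have h2 : finrank K N.toSubmodule = finrank K N₁ :=
      (Submodule.comapSubtypeEquivOfLe hle).finrank_eq
    change finrank K (N₂ ⧸ N.toSubmodule) = 1
    omega
  have hker := (LieModule.mem_ker K L _ _).mp (derivedSeries_one_le_ker_of_finrank_eq_one hQ hx)
    (LieSubmodule.Quotient.mk' N ⟨m, hm⟩)
  rwa [← LieModuleHom.map_lie, LieSubmodule.Quotient.mk_eq_zero] at hker

theorem LieModule.toEnd_pow_eq_zero_of_chain {n : ℕ} (C : Fin (n + 1) → LieSubmodule K L M)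
    (hmono : Monotone C) (h0 : C 0 = ⊥) (htop : C (Fin.last n) = ⊤)
    (hdim : ∀ k : Fin (n + 1), finrank K (C k) = k) {x : L} (hx : x ∈ derivedSeries K L 1) :
    toEnd K L M x ^ n = 0 :=
  Module.End.pow_eq_zero_of_chain (fun k ↦ (C k).toSubmodule) (by simp [h0]) (by simp [htop]) _
    fun i _ hm ↦ LieSubmodule.lie_mem_of_finrank_eq_succ (hmono i.castSucc_le_succ)
      (by simp [hdim]) hx hm

end LieModule

section LieAlgebra

variable {K L : Type*} [Field K] [LieRing L] [LieAlgebra K L]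

theorem LieSubalgebra.toSubmodule_engel (x : L) :
    (engel K x).toSubmodule = ⨆ k, LinearMap.ker (ad K L x ^ k) := by
  ext y
  rw [mem_toSubmodule, mem_engel_iff, Submodule.mem_iSup_of_directed _
    (monotone_nat_of_le_succ fun k ↦ ?_).directed_le]
  · rfl
  rw [pow_succ', Module.End.mul_eq_comp]
  exact LinearMap.ker_le_ker_comp _ _

variable [FiniteDimensional K L]

theorem LieAlgebra.isNilpotent_derivedSeries_one_of_chain {n : ℕ}
    (C : Fin (n + 1) → LieIdeal K L) (hmono : Monotone C) (h0 : C 0 = ⊥)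
    (htop : C (Fin.last n) = ⊤) (hdim : ∀ k : Fin (n + 1), finrank K (C k) = k) :
    LieRing.IsNilpotent (derivedSeries K L 1) := by
  rw [LieAlgebra.isNilpotent_iff_forall (R := K)]
  rintro ⟨x, hx⟩
  apply LieSubalgebra.isNilpotent_ad_of_isNilpotent_ad (derivedSeries K L 1 : LieSubalgebra K L)
    (x := ⟨x, hx⟩)
  exact ⟨n, toEnd_pow_eq_zero_of_chain C hmono h0 htop hdim hx⟩

theorem LieSubalgebra.engel_sup_derivedSeries_eq_top (x : L) :
    (engel K x).toSubmodule ⊔ (derivedSeries K L 1 : Submodule K L) = ⊤ := by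
  have hfitting := (ad K L x).isCompl_iSup_ker_pow_iInf_range_pow.codisjoint.eq_top
  rw [← toSubmodule_engel] at hfitting
  refine eq_top_mono (sup_le_sup_left ((iInf_le _ 1).trans ?_) _) hfitting
  rintro _ ⟨y, rfl⟩
  exact LieSubmodule.lie_mem_lie (LieSubmodule.mem_top x) (LieSubmodule.mem_top y)

theorem LieAlgebra.exists_isNilpotent_sup_derivedSeries_eq_top :
    ∃ B : LieSubalgebra K L, LieRing.IsNilpotent B ∧
      B.toSubmodule ⊔ (derivedSeries K L 1 : Submodule K L) = ⊤ := by
  induction h : finrank K L using Nat.strong_induction_on generalizing L with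
  | _ n ih =>
  by_cases hengel : ∀ x : L, engel K x = ⊤
  · exact ⟨⊤, isNilpotent_of_forall_le_engel ⊤ fun x _ ↦ (hengel x).ge, top_sup_eq _⟩
  obtain ⟨x, hx⟩ := not_forall.mp hengel
  set E := engel K x
  have hlt : finrank K E < n := h ▸ Submodule.finrank_lt
    (fun hE ↦ hx (toSubmodule_injective (hE.trans top_toSubmodule.symm)))
  obtain ⟨B, hB, hBE⟩ := ih _ hlt (L := E) rfl
  refine ⟨B.map E.incl, (B.equivMapOfInjective (f := E.incl)
    Subtype.val_injective).nilpotent_iff_equiv_nilpotent.mp hB, ?_⟩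
  rw [eq_top_iff, ← engel_sup_derivedSeries_eq_top x]
  refine sup_le (fun y hy ↦ ?_) le_sup_right
  obtain ⟨b, hb, d, hd, hbd⟩ :=
    Submodule.mem_sup.mp (hBE ▸ Submodule.mem_top (x := (⟨y, hy⟩ : E)))
  have hd' : (d : L) ∈ derivedSeries K L 1 :=
    LieIdeal.derivedSeries_map_le (f := E.incl) 1 (LieIdeal.mem_map hd)
  rw [show y = b + d from congrArg Subtype.val hbd.symm]
  exact Submodule.add_mem_sup ⟨b, hb, rfl⟩ hd'

end LieAlgebra

theorem supersolvable_derived_nilpotent_and_sum_of_two_nilpotent_general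
    (K : Type*) [Field K]
    (L : Type*) [LieRing L] [LieAlgebra K L] [FiniteDimensional K L]
    (n : ℕ)
    (C : Fin (n + 1) → LieIdeal K L)
    (hmono : Monotone C)
    (h0 : C 0 = ⊥) (htop : C (Fin.last n) = ⊤)
    (hdim : ∀ k : Fin (n + 1), Module.finrank K (C k) = (k : ℕ)) :
    LieRing.IsNilpotent (LieAlgebra.derivedSeries K L 1) ∧
    ∃ A B : LieSubalgebra K L, LieRing.IsNilpotent A ∧
      LieRing.IsNilpotent B ∧ (∀ x : L, ∃ a ∈ A, ∃ b ∈ B, x = a + b) := by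
  have hD := isNilpotent_derivedSeries_one_of_chain C hmono h0 htop hdim
  obtain ⟨B, hB, hsup⟩ := exists_isNilpotent_sup_derivedSeries_eq_top (K := K) (L := L)
  refine ⟨hD, derivedSeries K L 1, B, hD, hB, fun x ↦ ?_⟩
  obtain ⟨b, hb, d, hd, rfl⟩ := Submodule.mem_sup.mp (hsup ▸ Submodule.mem_top (x := x))
  exact ⟨d, hd, b, hb, add_comm b d⟩

/-- A supersolvable finite-dimensional Lie algebra over a field of characteristic `p > 0`
(one with a chain of ideals with one-dimensional quotients) has nilpotent derived
subalgebra; hence it is a sum of two nilpotent subalgebras. -/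
theorem supersolvable_derived_nilpotent_and_sum_of_two_nilpotent
    (K : Type*) [Field K] (p : ℕ) [CharP K p] (hp : 0 < p)
    (L : Type*) [LieRing L] [LieAlgebra K L] [FiniteDimensional K L]
    (n : ℕ) (hn : n = Module.finrank K L)
    (C : Fin (n + 1) → LieIdeal K L)
    (hmono : Monotone C)
    (h0 : C 0 = ⊥) (htop : C (Fin.last n) = ⊤)
    (hdim : ∀ k : Fin (n + 1), Module.finrank K (C k) = (k : ℕ)) :
    LieRing.IsNilpotent (LieAlgebra.derivedSeries K L 1) ∧
    ∃ A B : LieSubalgebra K L, LieRing.IsNilpotent A ∧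
      LieRing.IsNilpotent B ∧ (∀ x : L, ∃ a ∈ A, ∃ b ∈ B, x = a + b) :=
  supersolvable_derived_nilpotent_and_sum_of_two_nilpotent_general K L n C hmono h0 htop hdim
end

section
/- The Zassenhaus algebra W₁(n) over an algebraically closed field of characteristic p > 5 cannot be written as a sum of two nilpotent Lie subalgebras. In particular, for n = 1, the Witt algebra W₁(1) = Der(K[x]/(x^p)) is not a sum of two nilpotent subalgebras. -/
/-!
Let `φ` be the `e₋₁`-coordinate, so that `φ⁅x, y⁆ = c₀(x) φ(y) - φ(x) c₀(y)`. If a nilpotent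
subalgebra `M` contains `a` with `φ(a) ≠ 0`, then every `w ∈ M ∩ ker φ` has `c₀(w) = 0`, because
`φ|_M` is an eigenvector with eigenvalue `c₀(w)` of the transpose of the nilpotent `ad w`.
Bracketing with `a` lowers the lowest index of an element of `ker φ`, so `M ∩ ker φ = 0` and
`dim M ≤ 1`. If `W = A + B` with `A`, `B` nilpotent, one of them, say `A`, is not inside `ker φ`.
If neither is, `dim W ≤ 2 < pⁿ`; otherwise `B ⊇ ker φ ∋ e₀, e₁`, and `⁅e₀, e₁⁆ = -e₁` contradicts
the nilpotency of `B`.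
-/

open Finset

def wittCoeff (K : Type*) [Ring K] (i j : ℤ) : K :=
  ((i + j + 1).toNat.choose (j + 1).toNat : K) - ((i + j + 1).toNat.choose (i + 1).toNat : K)

theorem wittCoeff_neg_one_left (K : Type*) [Ring K] {m : ℤ} (hm : 0 ≤ m) :
    wittCoeff K (-1) m = -1 := by
  obtain ⟨m, rfl⟩ := Int.eq_ofNat_of_zero_le hm
  simp [wittCoeff, show ((m : ℤ) + 1).toNat = m + 1 by omega]

theorem wittCoeff_zero_left (K : Type*) [Ring K] {m : ℤ} (hm : -1 ≤ m) :
    wittCoeff K 0 m = -m := by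
  obtain ⟨m, rfl⟩ : ∃ n : ℕ, m = n - 1 := ⟨(m + 1).toNat, by omega⟩
  simp [wittCoeff]

/-- For `N = pⁿ - 2` this is the standard basis `e₋₁, …, e_N` of `W₁(n)`. -/
structure IsWittBasis (K : Type*) {W : Type*} [CommRing K] [LieRing W] [LieAlgebra K W]
    (N : ℤ) (e : ℤ → W) : Prop where
  linearIndependent : LinearIndependent K fun j : {j : ℤ // j ∈ Icc (-1) N} => e j.1
  span_eq_top : Submodule.span K (e '' Set.Icc (-1) N) = ⊤
  lie_eq : ∀ i ∈ Icc (-1) N, ∀ j ∈ Icc (-1) N,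
    ⁅e i, e j⁆ = if i + j ∈ Icc (-1) N then wittCoeff K i j • e (i + j) else 0

theorem Module.End.IsNilpotent.eq_zero_of_apply_eq_mul {K V : Type*} [Field K] [AddCommGroup V]
    [Module K V] {T : Module.End K V} (hT : IsNilpotent T) {f : V →ₗ[K] K} {t : K} (ht : t ≠ 0)
    (hf : ∀ v, f (T v) = t * f v) : f = 0 := by
  have hfk (k : ℕ) (v : V) : f ((T ^ k) v) = t ^ k * f v := by
    induction k generalizing v with
    | zero => simp
    | succ k ih => rw [pow_succ, Module.End.mul_apply, ih, hf, pow_succ, mul_assoc]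
  obtain ⟨k, hk⟩ := hT
  ext v
  simpa [hk, pow_ne_zero k ht] using (hfk k v).symm

namespace IsWittBasis

variable {K W : Type*} [Field K] [LieRing W] [LieAlgebra K W] {N : ℤ} {e : ℤ → W}
  (h : IsWittBasis K N e)

noncomputable def basis : Module.Basis {j : ℤ // j ∈ Icc (-1) N} K W :=
  .mk h.linearIndependent <| by
    rw [← h.span_eq_top]
    refine Submodule.span_mono ?_
    rintro _ ⟨i, hi, rfl⟩
    exact ⟨⟨i, by simpa using hi⟩, rfl⟩

theorem basis_apply {i : ℤ} (hi : i ∈ Icc (-1) N) : h.basis ⟨i, hi⟩ = e i :=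
  Module.Basis.mk_apply ..

theorem finrank_eq (h : IsWittBasis K N e) : Module.finrank K W = (N + 2).toNat := by
  rw [Module.finrank_eq_card_basis h.basis, Fintype.card_coe, Int.card_Icc]
  congr 1; ring

/-- The coefficient of `e i`; it is `0` for `i ∉ [-1, N]`. -/
noncomputable def coord (i : ℤ) : W →ₗ[K] K :=
  if hi : i ∈ Icc (-1) N then h.basis.coord ⟨i, hi⟩ else 0

theorem coord_of_notMem {i : ℤ} (hi : i ∉ Icc (-1) N) : h.coord i = 0 := dif_neg hi

theorem coord_of_lt {i : ℤ} (hi : i < -1) : h.coord i = 0 :=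
  h.coord_of_notMem (by simp; omega)

theorem coord_apply_of_mem {i : ℤ} (hi : i ∈ Icc (-1) N) (x : W) :
    h.coord i x = h.basis.repr x ⟨i, hi⟩ := by
  simp [coord, hi]

theorem coord_e {i j : ℤ} (hj : j ∈ Icc (-1) N) : h.coord i (e j) = if i = j then 1 else 0 := by
  by_cases hi : i ∈ Icc (-1) N
  · rw [coord_apply_of_mem h hi, ← h.basis_apply hj, Module.Basis.repr_self, Finsupp.single_apply]
    simp [eq_comm]
  · rw [h.coord_of_notMem hi, if_neg (by rintro rfl; exact hi hj)]; rfl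

theorem sum_coord_smul (x : W) : ∑ i ∈ Icc (-1) N, h.coord i x • e i = x := by
  conv_rhs => rw [← h.basis.sum_repr x]
  rw [← Finset.sum_coe_sort]
  exact Finset.sum_congr rfl fun ⟨i, hi⟩ _ => by rw [h.coord_apply_of_mem hi, h.basis_apply hi]

theorem eq_zero_of_forall_coord_eq_zero {x : W} (hx : ∀ i, h.coord i x = 0) : x = 0 := by
  rw [← h.sum_coord_smul x]
  simp [hx]

theorem coord_lie_e {i j k : ℤ} (hi : i ∈ Icc (-1) N) (hj : j ∈ Icc (-1) N)
    (hk : k ∈ Icc (-1) N) : h.coord k ⁅e i, e j⁆ = if i + j = k then wittCoeff K i j else 0 := by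
  rw [h.lie_eq i hi j hj]
  split_ifs with hij hijk hijk
  · subst hijk; simp [h.coord_e hij]
  · simp [h.coord_e hij, Ne.symm hijk]
  · exact absurd (hijk ▸ hk) hij
  · exact map_zero _

theorem coord_lie {k : ℤ} (hk : k ∈ Icc (-1) N) (x y : W) :
    h.coord k ⁅x, y⁆ =
      ∑ i ∈ Icc (-1) N, wittCoeff K i (k - i) * (h.coord i x * h.coord (k - i) y) := by
  conv_lhs => rw [← h.sum_coord_smul x, ← h.sum_coord_smul y]
  simp only [sum_lie_sum, smul_lie, lie_smul, map_sum, map_smul, smul_eq_mul]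
  refine Finset.sum_congr rfl fun i hi => ?_
  by_cases hki : k - i ∈ Icc (-1) N
  · rw [Finset.sum_eq_single_of_mem (k - i) hki]
    · rw [h.coord_lie_e hi hki hk, if_pos (by ring)]; ring
    · intro j hj hji
      rw [h.coord_lie_e hi hj hk, if_neg (by omega), mul_zero, mul_zero]
  · rw [h.coord_of_notMem hki, LinearMap.zero_apply, mul_zero, mul_zero]
    refine Finset.sum_eq_zero fun j hj => ?_
    rw [h.coord_lie_e hi hj hk, if_neg (by rintro rfl; simp_all), mul_zero, mul_zero]

theorem coord_neg_one_lie (x y : W) :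
    h.coord (-1) ⁅x, y⁆ = h.coord 0 x * h.coord (-1) y - h.coord (-1) x * h.coord 0 y := by
  by_cases hN : (-1 : ℤ) ∈ Icc (-1) N
  swap
  · simp [h.coord_of_notMem hN]
  rw [h.coord_lie hN, Finset.sum_eq_add (-1) 0 (by norm_num)]
  · simp [wittCoeff_neg_one_left, wittCoeff_zero_left]
    ring
  · intro i hi hi'
    rw [h.coord_of_lt (i := -1 - i) (by simp at hi; omega), LinearMap.zero_apply, mul_zero,
      mul_zero]
  · exact absurd hN
  · intro h0
    rw [h.coord_of_notMem h0, LinearMap.zero_apply, zero_mul, mul_zero]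

theorem coord_lie_eq_zero_of_lt {m k : ℤ} {x : W} (hx : ∀ j < m, h.coord j x = 0)
    (hk : k < m - 1) (a : W) : h.coord k ⁅a, x⁆ = 0 := by
  by_cases hkN : k ∈ Icc (-1) N
  swap
  · rw [h.coord_of_notMem hkN, LinearMap.zero_apply]
  rw [h.coord_lie hkN]
  refine Finset.sum_eq_zero fun i hi => ?_
  rw [hx (k - i) (by simp at hi; omega), mul_zero, mul_zero]

theorem coord_sub_one_lie {m : ℤ} (hm : 0 ≤ m) {x : W} (hx : ∀ j < m, h.coord j x = 0) (a : W) :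
    h.coord (m - 1) ⁅a, x⁆ = -(h.coord (-1) a * h.coord m x) := by
  by_cases hmN : m - 1 ∈ Icc (-1) N
  swap
  · rw [h.coord_of_notMem hmN, h.coord_of_notMem (i := m) (by simp at hmN ⊢; omega)]
    simp
  rw [h.coord_lie hmN, Finset.sum_eq_single (-1)]
  · simp [wittCoeff_neg_one_left K hm]
  · intro i hi hi'
    rw [hx (m - 1 - i) (by simp at hi; omega), mul_zero, mul_zero]
  · intro hN
    rw [h.coord_of_notMem hN, LinearMap.zero_apply, zero_mul, mul_zero]

theorem coord_e_zero_lie (h0 : 0 ≤ N) (k : ℤ) (z : W) :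
    h.coord k ⁅e 0, z⁆ = -k * h.coord k z := by
  by_cases hk : k ∈ Icc (-1) N
  swap
  · simp [h.coord_of_notMem hk]
  have h0N : (0 : ℤ) ∈ Icc (-1) N := by simp [h0]
  rw [h.coord_lie hk, Finset.sum_eq_single_of_mem 0 h0N]
  · simp [h.coord_e h0N, wittCoeff_zero_left K (Finset.mem_Icc.mp hk).1]
  · intro i _ hi
    rw [h.coord_e h0N, if_neg hi, zero_mul, mul_zero]

theorem finiteDimensional (h : IsWittBasis K N e) : FiniteDimensional K W := .of_basis h.basis

section Nilpotent

variable (M : LieSubalgebra K W) [LieRing.IsNilpotent M]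

theorem coord_zero_eq_zero_of_mem {a w : W} (ha : a ∈ M) (ha' : h.coord (-1) a ≠ 0)
    (hw : w ∈ M) (hw' : h.coord (-1) w = 0) : h.coord 0 w = 0 := by
  by_contra ht
  -- `coord (-1)` restricted to `M` is an eigenvector, with eigenvalue `coord 0 w`, of the
  -- transpose of the nilpotent `ad w`
  have hf := Module.End.IsNilpotent.eq_zero_of_apply_eq_mul
    (LieModule.isNilpotent_toEnd_of_isNilpotent K M M ⟨w, hw⟩)
    (f := h.coord (-1) ∘ₗ M.incl.toLinearMap) ht fun v => by simp [coord_neg_one_lie, hw']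
  exact ha' (LinearMap.congr_fun hf ⟨a, ha⟩)

theorem coord_eq_zero_of_mem_of_forall_lt {a : W} (ha : a ∈ M) (ha' : h.coord (-1) a ≠ 0)
    (m : ℕ) {x : W} (hx : x ∈ M) (hlt : ∀ j < (m : ℤ), h.coord j x = 0) : h.coord m x = 0 := by
  induction m generalizing x with
  | zero => exact h.coord_zero_eq_zero_of_mem M ha ha' hx (hlt (-1) (by norm_num))
  | succ m ih =>
    -- bracketing with `a` lowers the lowest index of `x` from `m + 1` to `m`
    have hax := ih (M.lie_mem ha hx) fun j hj =>
      h.coord_lie_eq_zero_of_lt hlt (by push_cast; omega) a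
    rw [show (m : ℤ) = ((m + 1 : ℕ) : ℤ) - 1 by push_cast; ring,
      h.coord_sub_one_lie (by positivity) hlt] at hax
    exact (mul_eq_zero.mp (neg_eq_zero.mp hax)).resolve_left ha'

theorem eq_zero_of_mem_of_coord_neg_one_eq_zero {a : W} (ha : a ∈ M) (ha' : h.coord (-1) a ≠ 0)
    {x : W} (hx : x ∈ M) (hx' : h.coord (-1) x = 0) : x = 0 := by
  have hlt : ∀ m : ℕ, ∀ j < (m : ℤ), h.coord j x = 0 := by
    intro m
    induction m with
    | zero =>
      intro j hj
      obtain rfl | hj := eq_or_lt_of_le (show j ≤ -1 by omega)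
      exacts [hx', by rw [h.coord_of_lt hj, LinearMap.zero_apply]]
    | succ m ih =>
      intro j hj
      obtain hj | rfl := lt_or_eq_of_le (show j ≤ m by omega)
      exacts [ih j hj, h.coord_eq_zero_of_mem_of_forall_lt M ha ha' m hx ih]
  exact h.eq_zero_of_forall_coord_eq_zero fun j => hlt (j.toNat + 1) j (by omega)

theorem finrank_le_one {a : W} (ha : a ∈ M) (ha' : h.coord (-1) a ≠ 0) :
    Module.finrank K M.toSubmodule ≤ 1 := by
  have hinj : Function.Injective (h.coord (-1) ∘ₗ M.toSubmodule.subtype) :=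
    (injective_iff_map_eq_zero _).mpr fun x hx =>
      Subtype.ext (h.eq_zero_of_mem_of_coord_neg_one_eq_zero M ha ha' x.2 hx)
  simpa using LinearMap.finrank_le_finrank_of_injective hinj

end Nilpotent

theorem not_isNilpotent_of_e_mem (h : IsWittBasis K N e) (hN : 1 ≤ N) {M : LieSubalgebra K W}
    (h0 : e 0 ∈ M) (h1 : e 1 ∈ M) : ¬ LieRing.IsNilpotent M := by
  intro hM
  have hf := Module.End.IsNilpotent.eq_zero_of_apply_eq_mul
    (LieModule.isNilpotent_toEnd_of_isNilpotent K M M ⟨e 0, h0⟩) (t := -1) (by norm_num)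
    (f := h.coord 1 ∘ₗ M.incl.toLinearMap) fun v => by simp [h.coord_e_zero_lie (by omega)]
  simpa [h.coord_e (j := 1) (by simp; omega)] using LinearMap.congr_fun hf ⟨e 1, h1⟩

theorem mem_of_coord_neg_one_eq_zero {A B : LieSubalgebra K W} [LieRing.IsNilpotent A]
    (hAB : ∀ x : W, ∃ a ∈ A, ∃ b ∈ B, x = a + b) {a : W} (ha : a ∈ A) (ha' : h.coord (-1) a ≠ 0)
    (hB : ∀ b ∈ B, h.coord (-1) b = 0) {x : W} (hx : h.coord (-1) x = 0) : x ∈ B := by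
  obtain ⟨a₁, ha₁, b, hb, rfl⟩ := hAB x
  have : a₁ = 0 := h.eq_zero_of_mem_of_coord_neg_one_eq_zero A ha ha' ha₁
    (by simpa [hB b hb] using hx)
  simpa [this] using hb

theorem not_exists_isNilpotent_add (h : IsWittBasis K N e) (hN : 1 ≤ N) :
    ¬ ∃ A B : LieSubalgebra K W, LieRing.IsNilpotent A ∧ LieRing.IsNilpotent B ∧
      ∀ x : W, ∃ a ∈ A, ∃ b ∈ B, x = a + b := by
  rintro ⟨A, B, hA, hB, hAB⟩
  wlog hA' : ∃ a ∈ A, h.coord (-1) a ≠ 0 generalizing A B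
  · obtain ⟨a, ha, b, hb, hab⟩ := hAB (e (-1))
    refine this B A hB hA (fun x => ?_) ⟨b, hb, fun hb' => ?_⟩
    · obtain ⟨a, ha, b, hb, rfl⟩ := hAB x
      exact ⟨b, hb, a, ha, add_comm a b⟩
    · push Not at hA'
      simpa [h.coord_e (j := -1) (by simp; omega), hA' a ha, hb'] using congrArg (h.coord (-1)) hab
  obtain ⟨a, ha, ha'⟩ := hA'
  by_cases hB' : ∃ b ∈ B, h.coord (-1) b ≠ 0
  · obtain ⟨b, hb, hb'⟩ := hB'
    have := h.finiteDimensional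
    have hsup : A.toSubmodule ⊔ B.toSubmodule = ⊤ := eq_top_iff.mpr fun x _ => by
      obtain ⟨a, ha, b, hb, rfl⟩ := hAB x
      exact Submodule.add_mem_sup ha hb
    have hle := Submodule.finrank_add_le_finrank_add_finrank A.toSubmodule B.toSubmodule
    rw [hsup, finrank_top, h.finrank_eq] at hle
    have := h.finrank_le_one A ha ha'
    have := h.finrank_le_one B hb hb'
    omega
  · push Not at hB'
    have hker (i : ℤ) (hi : i ∈ Icc (-1) N) (hi' : i ≠ -1) : e i ∈ B :=
      h.mem_of_coord_neg_one_eq_zero hAB ha ha' hB' (by simp [h.coord_e hi, hi'.symm])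
    exact h.not_isNilpotent_of_e_mem hN (hker 0 (by simp; omega) (by norm_num))
      (hker 1 (by simp; omega) (by norm_num)) hB

end IsWittBasis

theorem zassenhaus_not_sum_of_two_nilpotent_general
    (K : Type*) [Field K] (p n : ℕ) (hp5 : 5 < p)
    (hn : 1 ≤ n)
    (W : Type*) [LieRing W] [LieAlgebra K W]
    (e : ℤ → W)
    (hind : LinearIndependent K
      fun j : {j : ℤ // j ∈ Finset.Icc (-1 : ℤ) ((p : ℤ) ^ n - 2)} => e j.1)
    (hspan : Submodule.span K (e '' Set.Icc (-1 : ℤ) ((p : ℤ) ^ n - 2)) = ⊤)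
    (hbr : ∀ i ∈ Finset.Icc (-1 : ℤ) ((p : ℤ) ^ n - 2),
      ∀ j ∈ Finset.Icc (-1 : ℤ) ((p : ℤ) ^ n - 2),
      ⁅e i, e j⁆ =
        if i + j ∈ Finset.Icc (-1 : ℤ) ((p : ℤ) ^ n - 2) then
          (((Nat.choose (i + j + 1).toNat (j + 1).toNat : ℕ) : K) -
            ((Nat.choose (i + j + 1).toNat (i + 1).toNat : ℕ) : K)) • e (i + j)
        else 0) :
    ¬ ∃ A B : LieSubalgebra K W, LieRing.IsNilpotent A ∧
        LieRing.IsNilpotent B ∧ (∀ x : W, ∃ a ∈ A, ∃ b ∈ B, x = a + b) := by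
  have hpn : (p : ℤ) ≤ (p : ℤ) ^ n := le_self_pow₀ (by omega) (by omega)
  exact IsWittBasis.not_exists_isNilpotent_add ⟨hind, hspan, hbr⟩ (by omega)

/-- The Zassenhaus algebra `W₁(n)` over an algebraically closed field of characteristic
`p > 5` — presented by its basis `e₋₁, …, e_{pⁿ−2}` and structure constants
`⁅eᵢ, eⱼ⁆ = (C(i+j+1, j+1) − C(i+j+1, i+1)) e_{i+j}` — cannot be written as a sum of two
nilpotent Lie subalgebras.  (For `n = 1` this is the Witt algebra `Der(K[x]/(x^p))`.) -/
theorem zassenhaus_not_sum_of_two_nilpotent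
    (K : Type*) [Field K] [IsAlgClosed K] (p n : ℕ) (hp : p.Prime) (hp5 : 5 < p)
    [CharP K p] (hn : 1 ≤ n)
    (W : Type*) [LieRing W] [LieAlgebra K W] [FiniteDimensional K W]
    (e : ℤ → W)
    (hind : LinearIndependent K
      fun j : {j : ℤ // j ∈ Finset.Icc (-1 : ℤ) ((p : ℤ) ^ n - 2)} => e j.1)
    (hspan : Submodule.span K (e '' Set.Icc (-1 : ℤ) ((p : ℤ) ^ n - 2)) = ⊤)
    (hbr : ∀ i ∈ Finset.Icc (-1 : ℤ) ((p : ℤ) ^ n - 2),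
      ∀ j ∈ Finset.Icc (-1 : ℤ) ((p : ℤ) ^ n - 2),
      ⁅e i, e j⁆ =
        if i + j ∈ Finset.Icc (-1 : ℤ) ((p : ℤ) ^ n - 2) then
          (((Nat.choose (i + j + 1).toNat (j + 1).toNat : ℕ) : K) -
            ((Nat.choose (i + j + 1).toNat (i + 1).toNat : ℕ) : K)) • e (i + j)
        else 0) :
    ¬ ∃ A B : LieSubalgebra K W, LieRing.IsNilpotent A ∧
        LieRing.IsNilpotent B ∧ (∀ x : W, ∃ a ∈ A, ∃ b ∈ B, x = a + b) :=
  zassenhaus_not_sum_of_two_nilpotent_general K p n hp5 hn W e hind hspan hbr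
end
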